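/- arXiv:1507.02242 — 5 statements merged into one kernel-verified Lean document; each statement's English description precedes it below -/
import Mathlib

section
/- Let p, q be positive integers with p ≤ q, and let F be a (p,q)-tilted Sperner family with patterns on [n]. Fix x ∈ [n] and suppose every member F of a subfamily F_x has the property that x is a (p,q)-cut point of F. Then ∑_{F ∈ F_x} 1/( C(x, |F ∩ [x]|) · C(n-x, |F \ [x]|) ) ≤ q, where C(a,b) denotes the binomial coefficient. -/
open Finset

/-- `𝓕` is a `(p,q)`-tilted Sperner family with patterns. -/
def TiltedSpernerWithPatterns (p q : ℕ) (𝓕 : Finset (Finset ℕ)) : Prop :=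
  ∀ F ∈ 𝓕, ∀ G ∈ 𝓕, F ≠ G →
    ¬(p * (F \ G).card = q * (G \ F).card ∧ ∀ f ∈ F \ G, ∀ g ∈ G \ F, g < f)



lemma card_equiv_subtype_eq {α β : Type} [Fintype α] [Fintype β] [DecidableEq α] [DecidableEq β]
    (P : α → Prop) (Q : β → Prop) [DecidablePred P] [DecidablePred Q]
    (h1 : Fintype.card {a // P a} = Fintype.card {b // Q b})
    (h2 : Fintype.card {a // ¬ P a} = Fintype.card {b // ¬ Q b}) :
    Fintype.card {σ : α ≃ β // ∀ a, P a ↔ Q (σ a)} =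
      Nat.factorial (Fintype.card {a // P a}) * Nat.factorial (Fintype.card {a // ¬ P a}) := by
  have e : {σ : α ≃ β // ∀ a, P a ↔ Q (σ a)} ≃
      ({a // P a} ≃ {b // Q b}) × ({a // ¬ P a} ≃ {b // ¬ Q b}) :=
  { toFun := fun σ => (σ.1.subtypeEquiv σ.2, σ.1.subtypeEquiv (fun a => not_congr (σ.2 a))),
    invFun := fun e => ⟨(Equiv.sumCompl P).symm.trans ((e.1.sumCongr e.2).trans (Equiv.sumCompl Q)), by
      intro a
      by_cases h : P a
      · simp only [Equiv.trans_apply, Equiv.sumCompl_symm_apply_of_pos h,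
          Equiv.sumCongr_apply, Sum.map_inl, Equiv.sumCompl_apply_inl]
        exact iff_of_true h (e.1 ⟨a, h⟩).2
      · simp only [Equiv.trans_apply, Equiv.sumCompl_symm_apply_of_neg h,
          Equiv.sumCongr_apply, Sum.map_inr, Equiv.sumCompl_apply_inr]
        exact iff_of_false h (e.2 ⟨a, h⟩).2⟩,
    left_inv := by
      rintro ⟨σ, hσ⟩
      ext a
      by_cases h : P a
      · simp [Equiv.sumCompl_symm_apply_of_pos h]
      · simp [Equiv.sumCompl_symm_apply_of_neg h],
    right_inv := by
      rintro ⟨e1, e2⟩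
      refine Prod.ext ?_ ?_
      · ext a
        simp [Equiv.sumCompl_symm_apply_of_pos a.2]
      · ext a
        simp [Equiv.sumCompl_symm_apply_of_neg a.2] }
  rw [Fintype.card_congr e, Fintype.card_prod,
    Fintype.card_equiv (Fintype.equivOfCardEq h1), Fintype.card_equiv (Fintype.equivOfCardEq h2)]

lemma card_subtype_coe_mem (S A : Finset ℕ) :
    Fintype.card {i : {y // y ∈ S} // (i : ℕ) ∈ A} = (S.filter (· ∈ A)).card := by
  rw [← Fintype.card_coe]
  exact Fintype.card_congr
    { toFun := fun i => ⟨i.1.1, mem_filter.mpr ⟨i.1.2, i.2⟩⟩,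
      invFun := fun j => ⟨⟨j.1, (mem_filter.mp j.2).1⟩, (mem_filter.mp j.2).2⟩,
      left_inv := fun _ => rfl, right_inv := fun _ => rfl }

lemma card_fin_subtype_lt (m a : ℕ) (h : a ≤ m) :
    Fintype.card {j : Fin m // (j : ℕ) < a} = a := by
  have e : {j : Fin m // (j : ℕ) < a} ≃ Fin a :=
    { toFun := fun j => ⟨j.1.1, j.2⟩,
      invFun := fun i => ⟨⟨i.1, lt_of_lt_of_le i.2 h⟩, i.2⟩,
      left_inv := fun _ => rfl, right_inv := fun _ => rfl }
  rw [Fintype.card_congr e, Fintype.card_fin]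

example (S F : Finset ℕ) : S.filter (· ∈ F) = F ∩ S := by
  rw [Finset.filter_mem_eq_inter, inter_comm]

lemma count_side (S F : Finset ℕ) (m : ℕ) (hm : S.card = m) :
    Fintype.card {σ : {y // y ∈ S} ≃ Fin m //
        ∀ i : {y // y ∈ S}, ((i : ℕ) ∈ F ↔ (σ i : ℕ) < (F ∩ S).card)} =
      Nat.factorial (F ∩ S).card * Nat.factorial (m - (F ∩ S).card) := by
  classical
  have haS : (F ∩ S).card ≤ m := hm ▸ card_le_card inter_subset_right
  have h1 : Fintype.card {i : {y // y ∈ S} // (i : ℕ) ∈ F} = (F ∩ S).card := by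
    rw [card_subtype_coe_mem, Finset.filter_mem_eq_inter, inter_comm]
  have h2 : Fintype.card {i : {y // y ∈ S} // ¬ (i : ℕ) ∈ F} = m - (F ∩ S).card := by
    rw [Fintype.card_subtype_compl, h1, Fintype.card_coe, hm]
  have h3 : Fintype.card {j : Fin m // (j : ℕ) < (F ∩ S).card} = (F ∩ S).card :=
    card_fin_subtype_lt m _ haS
  have h4 : Fintype.card {j : Fin m // ¬ (j : ℕ) < (F ∩ S).card} = m - (F ∩ S).card := by
    rw [Fintype.card_subtype_compl, h3, Fintype.card_fin]
  rw [card_equiv_subtype_eq _ _ (h1.trans h3.symm) (h2.trans h4.symm), h1, h2]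

def GoodPair (n x : ℕ) (F : Finset ℕ)
    (pr : ({y // y ∈ Finset.Icc 1 x} ≃ Fin x) ×
          ({y // y ∈ Finset.Icc (x+1) n} ≃ Fin (n-x))) : Prop :=
  (∀ i : {y // y ∈ Finset.Icc 1 x},
      ((i : ℕ) ∈ F ↔ (pr.1 i : ℕ) < (F ∩ Finset.Icc 1 x).card)) ∧
  (∀ j : {y // y ∈ Finset.Icc (x+1) n},
      ((j : ℕ) ∈ F ↔ (pr.2 j : ℕ) < (F ∩ Finset.Icc (x+1) n).card))


lemma countGoodPair (n x : ℕ) (hx1 : 1 ≤ x) (hxn : x ≤ n) (F : Finset ℕ)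
    [DecidablePred (GoodPair n x F)] :
    (Finset.univ.filter (GoodPair n x F)).card =
      Nat.factorial (F ∩ Finset.Icc 1 x).card *
        Nat.factorial (x - (F ∩ Finset.Icc 1 x).card) *
      (Nat.factorial (F ∩ Finset.Icc (x+1) n).card *
        Nat.factorial ((n - x) - (F ∩ Finset.Icc (x+1) n).card)) := by
  classical
  rw [← Fintype.card_subtype]
  have e1 : {pr : ({y // y ∈ Finset.Icc 1 x} ≃ Fin x) ×
          ({y // y ∈ Finset.Icc (x+1) n} ≃ Fin (n-x)) // GoodPair n x F pr} ≃
      {σ : {y // y ∈ Finset.Icc 1 x} ≃ Fin x //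
        ∀ i : {y // y ∈ Finset.Icc 1 x},
          ((i : ℕ) ∈ F ↔ (σ i : ℕ) < (F ∩ Finset.Icc 1 x).card)} ×
      {τ : {y // y ∈ Finset.Icc (x+1) n} ≃ Fin (n-x) //
        ∀ j : {y // y ∈ Finset.Icc (x+1) n},
          ((j : ℕ) ∈ F ↔ (τ j : ℕ) < (F ∩ Finset.Icc (x+1) n).card)} :=
    Equiv.subtypeProdEquivProd
      (p := fun (σ : {y // y ∈ Finset.Icc 1 x} ≃ Fin x) => ∀ i : {y // y ∈ Finset.Icc 1 x},
          ((i : ℕ) ∈ F ↔ (σ i : ℕ) < (F ∩ Finset.Icc 1 x).card))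
      (q := fun (τ : {y // y ∈ Finset.Icc (x+1) n} ≃ Fin (n-x)) => ∀ j : {y // y ∈ Finset.Icc (x+1) n},
          ((j : ℕ) ∈ F ↔ (τ j : ℕ) < (F ∩ Finset.Icc (x+1) n).card))
  rw [Fintype.card_congr e1, Fintype.card_prod,
    count_side _ F x (by rw [Nat.card_Icc]; omega),
    count_side _ F (n - x) (by rw [Nat.card_Icc]; omega)]

lemma no_two (n p q x : ℕ) (hp : 0 < p) (hq : 0 < q) (hxn : x ≤ n)
    (𝓕 : Finset (Finset ℕ)) (htilt : TiltedSpernerWithPatterns p q 𝓕)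
    (F G : Finset ℕ) (hF : F ∈ 𝓕) (hG : G ∈ 𝓕)
    (hFsub : F ⊆ Finset.Icc 1 n) (hGsub : G ⊆ Finset.Icc 1 n)
    (σ : {y // y ∈ Finset.Icc 1 x} ≃ Fin x)
    (τ : {y // y ∈ Finset.Icc (x+1) n} ≃ Fin (n-x))
    (hFa : ∀ i : {y // y ∈ Finset.Icc 1 x},
      ((i : ℕ) ∈ F ↔ (σ i : ℕ) < (F ∩ Finset.Icc 1 x).card))
    (hFb : ∀ j : {y // y ∈ Finset.Icc (x+1) n},
      ((j : ℕ) ∈ F ↔ (τ j : ℕ) < (F ∩ Finset.Icc (x+1) n).card))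
    (hGa : ∀ i : {y // y ∈ Finset.Icc 1 x},
      ((i : ℕ) ∈ G ↔ (σ i : ℕ) < (G ∩ Finset.Icc 1 x).card))
    (hGb : ∀ j : {y // y ∈ Finset.Icc (x+1) n},
      ((j : ℕ) ∈ G ↔ (τ j : ℕ) < (G ∩ Finset.Icc (x+1) n).card))
    (hab : (F ∩ Finset.Icc 1 x).card < (G ∩ Finset.Icc 1 x).card)
    (hbF : (F ∩ Finset.Icc (x+1) n).card ≤ n - x)
    (hbG : (G ∩ Finset.Icc (x+1) n).card ≤ n - x)
    (hF1 : q * (F ∩ Finset.Icc 1 x).card ≤ p * (n - x - (F ∩ Finset.Icc (x+1) n).card))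
    (hG1 : q * (G ∩ Finset.Icc 1 x).card ≤ p * (n - x - (G ∩ Finset.Icc (x+1) n).card))
    (ht : p * (n - x - (F ∩ Finset.Icc (x+1) n).card) - q * (F ∩ Finset.Icc 1 x).card
        = p * (n - x - (G ∩ Finset.Icc (x+1) n).card) - q * (G ∩ Finset.Icc 1 x).card) :
    False := by
  classical
  set S := Finset.Icc 1 x with hS
  set T := Finset.Icc (x+1) n with hT
  set aF := (F ∩ S).card with haF
  set aG := (G ∩ S).card with haG
  set bF := (F ∩ T).card with hbFdef
  set bG := (G ∩ T).card with hbGdef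
  -- integer form of the t-equation
  have hZ : (p : ℤ) * ((n : ℤ) - x - bF) - q * aF = (p : ℤ) * ((n : ℤ) - x - bG) - q * aG := by
    have e1 : ((n - x - bF : ℕ) : ℤ) = (n : ℤ) - x - bF := by omega
    have e2 : ((n - x - bG : ℕ) : ℤ) = (n : ℤ) - x - bG := by omega
    zify [hF1, hG1] at ht
    push_cast at ht
    rw [e1, e2] at ht
    exact ht
  have key : (p : ℤ) * ((bF : ℤ) - bG) = (q : ℤ) * ((aG : ℤ) - aF) := by
    linear_combination -hZ
  -- bG < bF
  have hbGF : bG < bF := by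
    by_contra hle
    push_neg at hle
    have h1 : (p : ℤ) * ((bF : ℤ) - bG) ≤ 0 :=
      mul_nonpos_of_nonneg_of_nonpos (by positivity) (by
        have : (bF : ℤ) ≤ bG := by exact_mod_cast hle
        linarith)
    have h2 : (0 : ℤ) < (q : ℤ) * ((aG : ℤ) - aF) := by
      have : (aF : ℤ) < aG := by exact_mod_cast hab
      have hq' : (0 : ℤ) < q := by exact_mod_cast hq
      nlinarith
    linarith [key]
  -- containments
  have hA : F ∩ S ⊆ G ∩ S := by
    intro y hy
    obtain ⟨hyF, hyS⟩ := mem_inter.mp hy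
    refine mem_inter.mpr ⟨(hGa ⟨y, hyS⟩).mpr ?_, hyS⟩
    exact lt_trans ((hFa ⟨y, hyS⟩).mp hyF) hab
  have hB : G ∩ T ⊆ F ∩ T := by
    intro y hy
    obtain ⟨hyG, hyT⟩ := mem_inter.mp hy
    refine mem_inter.mpr ⟨(hFb ⟨y, hyT⟩).mpr ?_, hyT⟩
    exact lt_trans ((hGb ⟨y, hyT⟩).mp hyG) hbGF
  -- difference sets
  have hGF : G \ F = (G ∩ S) \ (F ∩ S) := by
    ext y
    simp only [mem_sdiff, mem_inter]
    constructor
    · rintro ⟨hyG, hyF⟩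
      have hyn := mem_Icc.mp (hGsub hyG)
      by_cases hyS : y ∈ S
      · exact ⟨⟨hyG, hyS⟩, fun h => hyF h.1⟩
      · exfalso
        have hyT : y ∈ T := by
          simp only [hS, mem_Icc] at hyS
          simp only [hT, mem_Icc]
          omega
        exact hyF (mem_inter.mp (hB (mem_inter.mpr ⟨hyG, hyT⟩))).1
    · rintro ⟨⟨hyG, hyS⟩, h2⟩
      exact ⟨hyG, fun hyF => h2 ⟨hyF, hyS⟩⟩
  have hFG : F \ G = (F ∩ T) \ (G ∩ T) := by
    ext y
    simp only [mem_sdiff, mem_inter]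
    constructor
    · rintro ⟨hyF, hyG⟩
      have hyn := mem_Icc.mp (hFsub hyF)
      by_cases hyT : y ∈ T
      · exact ⟨⟨hyF, hyT⟩, fun h => hyG h.1⟩
      · exfalso
        have hyS : y ∈ S := by
          simp only [hT, mem_Icc] at hyT
          simp only [hS, mem_Icc]
          omega
        exact hyG (mem_inter.mp (hA (mem_inter.mpr ⟨hyF, hyS⟩))).1
    · rintro ⟨⟨hyF, hyT⟩, h2⟩
      exact ⟨hyF, fun hyG => h2 ⟨hyG, hyT⟩⟩
  have hcardGF : (G \ F).card = aG - aF := by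
    rw [hGF, card_sdiff_of_subset hA]
  have hcardFG : (F \ G).card = bF - bG := by
    rw [hFG, card_sdiff_of_subset hB]
  have hne : F ≠ G := by
    intro h
    rw [haF, haG, h] at hab
    exact lt_irrefl _ hab
  refine htilt F hF G hG hne ⟨?_, ?_⟩
  · rw [hcardFG, hcardGF]
    zify [hbGF.le, hab.le]
    linear_combination key
  · intro f hf g hg
    rw [hFG] at hf
    rw [hGF] at hg
    have hfT : f ∈ T := (mem_inter.mp (mem_sdiff.mp hf).1).2
    have hgS : g ∈ S := (mem_inter.mp (mem_sdiff.mp hg).1).2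
    simp only [hT, mem_Icc] at hfT
    simp only [hS, mem_Icc] at hgS
    omega

/-- The permutation-method inequality for the subfamily with cut point `x`. -/
theorem sum_inv_binom_le (n p q x : ℕ) (hn : 0 < n) (hp : 0 < p) (hpq : p ≤ q)
    (hx : x ∈ Finset.Icc 1 n) (𝓕 𝓕x : Finset (Finset ℕ))
    (hsub : ∀ F ∈ 𝓕, F ⊆ Finset.Icc 1 n)
    (htilt : TiltedSpernerWithPatterns p q 𝓕)
    (h𝓕x : 𝓕x ⊆ 𝓕)
    (hcut : ∀ F ∈ 𝓕x,
      0 ≤ ((n : ℝ) - (x : ℝ) - ((F ∩ Finset.Icc (x + 1) n).card : ℝ)) / (q : ℝ)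
            - ((F ∩ Finset.Icc 1 x).card : ℝ) / (p : ℝ) ∧
      ((n : ℝ) - (x : ℝ) - ((F ∩ Finset.Icc (x + 1) n).card : ℝ)) / (q : ℝ)
            - ((F ∩ Finset.Icc 1 x).card : ℝ) / (p : ℝ) < 1 / (p : ℝ)) :
    ∑ F ∈ 𝓕x, (1 : ℝ) /
        ((x.choose (F ∩ Finset.Icc 1 x).card : ℝ) *
          ((n - x).choose (F \ Finset.Icc 1 x).card : ℝ)) ≤ (q : ℝ) := by
  classical
  obtain ⟨hx1, hxn⟩ := mem_Icc.mp hx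
  have hq : 0 < q := lt_of_lt_of_le hp hpq
  have hp' : (0 : ℝ) < p := by exact_mod_cast hp
  have hq' : (0 : ℝ) < q := by exact_mod_cast hq
  -- basic cardinality facts
  have hale : ∀ F ∈ 𝓕x, (F ∩ Finset.Icc 1 x).card ≤ x := by
    intro F hF
    calc (F ∩ Finset.Icc 1 x).card ≤ (Finset.Icc 1 x).card :=
          card_le_card inter_subset_right
      _ = x := by rw [Nat.card_Icc]; omega
  have hble : ∀ F ∈ 𝓕x, (F ∩ Finset.Icc (x+1) n).card ≤ n - x := by
    intro F hF
    calc (F ∩ Finset.Icc (x+1) n).card ≤ (Finset.Icc (x+1) n).card :=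
          card_le_card inter_subset_right
      _ = n - x := by rw [Nat.card_Icc]; omega
  -- the natural-number cut point facts
  have hcutN : ∀ F ∈ 𝓕x,
      q * (F ∩ Finset.Icc 1 x).card ≤ p * (n - x - (F ∩ Finset.Icc (x+1) n).card) ∧
      p * (n - x - (F ∩ Finset.Icc (x+1) n).card) < q * (F ∩ Finset.Icc 1 x).card + q := by
    intro F hF
    obtain ⟨h1, h2⟩ := hcut F hF
    have hb := hble F hF
    set aN := (F ∩ Finset.Icc 1 x).card
    set bN := (F ∩ Finset.Icc (x+1) n).card
    have e2 : ((p * (n - x - bN) : ℕ) : ℝ) = (p : ℝ) * ((n : ℝ) - x - bN) := by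
      rw [Nat.cast_mul, Nat.cast_sub hb, Nat.cast_sub hxn]
    constructor
    · have h3 : (aN : ℝ) / p ≤ ((n : ℝ) - x - bN) / q := by linarith
      have h4 := (div_le_div_iff₀ hp' hq').mp h3
      have h5 : ((q * aN : ℕ) : ℝ) ≤ ((p * (n - x - bN) : ℕ) : ℝ) := by
        rw [e2]; push_cast; linarith
      exact_mod_cast h5
    · have h3 : ((n : ℝ) - x - bN) / q < ((aN : ℝ) + 1) / p := by
        rw [add_div]; linarith
      have h4 := (div_lt_div_iff₀ hq' hp').mp h3
      have h5 : ((p * (n - x - bN) : ℕ) : ℝ) < ((q * aN + q : ℕ) : ℝ) := by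
        rw [e2]; push_cast; linarith
      exact_mod_cast h5
  -- splitting of members
  have hsplit : ∀ F, F ⊆ Finset.Icc 1 n →
      F = (F ∩ Finset.Icc 1 x) ∪ (F ∩ Finset.Icc (x+1) n) := by
    intro F hFsub
    rw [← Finset.inter_union_distrib_left]
    refine (Finset.inter_eq_left.mpr ?_).symm
    intro y hy
    have := mem_Icc.mp (hFsub hy)
    simp only [mem_union, mem_Icc]
    omega
  -- the sum swap
  have hswap : ∑ F ∈ 𝓕x, (Finset.univ.filter (GoodPair n x F)).card
      = ∑ pr : ({y // y ∈ Finset.Icc 1 x} ≃ Fin x) ×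
          ({y // y ∈ Finset.Icc (x+1) n} ≃ Fin (n-x)),
          (𝓕x.filter (fun F => GoodPair n x F pr)).card := by
    simp_rw [card_filter]
    exact Finset.sum_comm
  -- per-pair bound
  have hbound : ∀ pr : ({y // y ∈ Finset.Icc 1 x} ≃ Fin x) ×
      ({y // y ∈ Finset.Icc (x+1) n} ≃ Fin (n-x)),
      (𝓕x.filter (fun F => GoodPair n x F pr)).card ≤ q := by
    intro pr
    have hmaps : ∀ F ∈ 𝓕x.filter (fun F => GoodPair n x F pr),
        (fun F => p * (n - x - (F ∩ Finset.Icc (x+1) n).card)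
          - q * (F ∩ Finset.Icc 1 x).card) F ∈ Finset.range q := by
      intro F hF
      obtain ⟨h1, h2⟩ := hcutN F (mem_filter.mp hF).1
      simp only [mem_range]
      exact (tsub_lt_iff_right h1).mpr (lt_of_lt_of_le h2 (Nat.add_comm _ _).le)
    have hinj : Set.InjOn (fun F => p * (n - x - (F ∩ Finset.Icc (x+1) n).card)
          - q * (F ∩ Finset.Icc 1 x).card)
        (𝓕x.filter (fun F => GoodPair n x F pr)) := by
      intro F hF G hG htval
      simp only [coe_filter, Set.mem_setOf_eq] at hF hG
      obtain ⟨hFx, hFgood⟩ := hF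
      obtain ⟨hGx, hGgood⟩ := hG
      simp only at htval
      have hFc := hcutN F hFx
      have hGc := hcutN G hGx
      have htv : p * (n - x - (F ∩ Finset.Icc (x+1) n).card)
            - q * (F ∩ Finset.Icc 1 x).card
          = p * (n - x - (G ∩ Finset.Icc (x+1) n).card)
            - q * (G ∩ Finset.Icc 1 x).card := htval
      rcases lt_trichotomy (F ∩ Finset.Icc 1 x).card (G ∩ Finset.Icc 1 x).card with hlt | heq | hgt
      · exact absurd htv (fun htv => no_two n p q x hp hq hxn 𝓕 htilt F G
          (h𝓕x hFx) (h𝓕x hGx) (hsub F (h𝓕x hFx)) (hsub G (h𝓕x hGx)) pr.1 pr.2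
          hFgood.1 hFgood.2 hGgood.1 hGgood.2 hlt (hble F hFx) (hble G hGx)
          hFc.1 hGc.1 htv)
      · -- equal a-values; conclude F = G
        have hmul : p * (n - x - (F ∩ Finset.Icc (x+1) n).card)
            = p * (n - x - (G ∩ Finset.Icc (x+1) n).card) := by
          have h1 := hFc.1
          have h2 := hGc.1
          rw [heq] at h1 htv
          revert h1 h2 htv
          generalize p * (n - x - (F ∩ Finset.Icc (x+1) n).card) = u1
          generalize p * (n - x - (G ∩ Finset.Icc (x+1) n).card) = u2
          generalize q * (G ∩ Finset.Icc 1 x).card = v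
          omega
        have hceq : n - x - (F ∩ Finset.Icc (x+1) n).card
            = n - x - (G ∩ Finset.Icc (x+1) n).card :=
          Nat.eq_of_mul_eq_mul_left hp hmul
        have hbeq : (F ∩ Finset.Icc (x+1) n).card = (G ∩ Finset.Icc (x+1) n).card := by
          have := hble F hFx
          have := hble G hGx
          omega
        -- sets coincide
        have hAS : F ∩ Finset.Icc 1 x = G ∩ Finset.Icc 1 x := by
          ext y
          simp only [mem_inter]
          constructor
          · rintro ⟨hyF, hyS⟩
            exact ⟨(hGgood.1 ⟨y, hyS⟩).mpr (heq ▸ (hFgood.1 ⟨y, hyS⟩).mp hyF), hyS⟩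
          · rintro ⟨hyG, hyS⟩
            exact ⟨(hFgood.1 ⟨y, hyS⟩).mpr (heq ▸ (hGgood.1 ⟨y, hyS⟩).mp hyG), hyS⟩
        have hBT : F ∩ Finset.Icc (x+1) n = G ∩ Finset.Icc (x+1) n := by
          ext y
          simp only [mem_inter]
          constructor
          · rintro ⟨hyF, hyT⟩
            exact ⟨(hGgood.2 ⟨y, hyT⟩).mpr (hbeq ▸ (hFgood.2 ⟨y, hyT⟩).mp hyF), hyT⟩
          · rintro ⟨hyG, hyT⟩
            exact ⟨(hFgood.2 ⟨y, hyT⟩).mpr (hbeq ▸ (hGgood.2 ⟨y, hyT⟩).mp hyG), hyT⟩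
        calc F = (F ∩ Finset.Icc 1 x) ∪ (F ∩ Finset.Icc (x+1) n) :=
              hsplit F (hsub F (h𝓕x hFx))
          _ = (G ∩ Finset.Icc 1 x) ∪ (G ∩ Finset.Icc (x+1) n) := by rw [hAS, hBT]
          _ = G := (hsplit G (hsub G (h𝓕x hGx))).symm
      · exact absurd htv.symm (fun htv => no_two n p q x hp hq hxn 𝓕 htilt G F
          (h𝓕x hGx) (h𝓕x hFx) (hsub G (h𝓕x hGx)) (hsub F (h𝓕x hFx)) pr.1 pr.2
          hGgood.1 hGgood.2 hFgood.1 hFgood.2 hgt (hble G hGx) (hble F hFx)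
          hGc.1 hFc.1 htv)
    calc (𝓕x.filter (fun F => GoodPair n x F pr)).card ≤ (Finset.range q).card :=
          Finset.card_le_card_of_injOn _ hmaps hinj
      _ = q := card_range q
  -- cardinality of the pair type
  have hcardPT : Fintype.card (({y // y ∈ Finset.Icc 1 x} ≃ Fin x) ×
      ({y // y ∈ Finset.Icc (x+1) n} ≃ Fin (n-x)))
      = Nat.factorial x * Nat.factorial (n - x) := by
    rw [Fintype.card_prod]
    congr 1
    · rw [Fintype.card_equiv (Fintype.equivOfCardEq (by
        rw [Fintype.card_coe, Nat.card_Icc, Fintype.card_fin]; omega))]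
      rw [Fintype.card_coe, Nat.card_Icc]
      congr 1 <;> omega
    · rw [Fintype.card_equiv (Fintype.equivOfCardEq (by
        rw [Fintype.card_coe, Nat.card_Icc, Fintype.card_fin]; omega))]
      rw [Fintype.card_coe, Nat.card_Icc]
      congr 1 <;> omega
  -- the integer double-counting inequality
  have natineq : ∑ F ∈ 𝓕x,
      (Nat.factorial (F ∩ Finset.Icc 1 x).card *
        Nat.factorial (x - (F ∩ Finset.Icc 1 x).card) *
      (Nat.factorial (F ∩ Finset.Icc (x+1) n).card *
        Nat.factorial ((n - x) - (F ∩ Finset.Icc (x+1) n).card)))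
      ≤ q * (Nat.factorial x * Nat.factorial (n - x)) := by
    calc ∑ F ∈ 𝓕x, (Nat.factorial (F ∩ Finset.Icc 1 x).card *
        Nat.factorial (x - (F ∩ Finset.Icc 1 x).card) *
      (Nat.factorial (F ∩ Finset.Icc (x+1) n).card *
        Nat.factorial ((n - x) - (F ∩ Finset.Icc (x+1) n).card)))
        = ∑ F ∈ 𝓕x, (Finset.univ.filter (GoodPair n x F)).card :=
          Finset.sum_congr rfl (fun F _ => (countGoodPair n x hx1 hxn F).symm)
      _ = ∑ pr : ({y // y ∈ Finset.Icc 1 x} ≃ Fin x) ×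
          ({y // y ∈ Finset.Icc (x+1) n} ≃ Fin (n-x)),
          (𝓕x.filter (fun F => GoodPair n x F pr)).card := hswap
      _ ≤ ∑ _pr : ({y // y ∈ Finset.Icc 1 x} ≃ Fin x) ×
          ({y // y ∈ Finset.Icc (x+1) n} ≃ Fin (n-x)), q :=
          Finset.sum_le_sum (fun pr _ => hbound pr)
      _ = Fintype.card (({y // y ∈ Finset.Icc 1 x} ≃ Fin x) ×
          ({y // y ∈ Finset.Icc (x+1) n} ≃ Fin (n-x))) * q := by
          rw [Finset.sum_const, card_univ, smul_eq_mul]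
      _ = q * (Nat.factorial x * Nat.factorial (n - x)) := by rw [hcardPT]; ring
  -- convert to the real statement
  have hD : (0 : ℝ) < (Nat.factorial x : ℝ) * (Nat.factorial (n - x) : ℝ) := by positivity
  have hterm : ∀ F ∈ 𝓕x, (1 : ℝ) /
        ((x.choose (F ∩ Finset.Icc 1 x).card : ℝ) *
          ((n - x).choose (F \ Finset.Icc 1 x).card : ℝ))
      = ((Nat.factorial (F ∩ Finset.Icc 1 x).card *
        Nat.factorial (x - (F ∩ Finset.Icc 1 x).card) *
      (Nat.factorial (F ∩ Finset.Icc (x+1) n).card *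
        Nat.factorial ((n - x) - (F ∩ Finset.Icc (x+1) n).card)) : ℕ) : ℝ)
        / ((Nat.factorial x : ℝ) * (Nat.factorial (n - x) : ℝ)) := by
    intro F hF
    have hbcard : F \ Finset.Icc 1 x = F ∩ Finset.Icc (x+1) n := by
      ext y
      have hy : y ∈ F → (1 ≤ y ∧ y ≤ n) := fun h => mem_Icc.mp (hsub F (h𝓕x hF) h)
      simp only [mem_sdiff, mem_inter, mem_Icc]
      by_cases hyF : y ∈ F
      · have := hy hyF
        simp only [hyF, true_and]
        omega
      · simp [hyF]
    rw [hbcard]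
    have t1 := Nat.choose_mul_factorial_mul_factorial (hale F hF)
    have t2 := Nat.choose_mul_factorial_mul_factorial (hble F hF)
    have hC1 : (0 : ℝ) < (x.choose (F ∩ Finset.Icc 1 x).card : ℝ) := by
      exact_mod_cast Nat.choose_pos (hale F hF)
    have hC2 : (0 : ℝ) < ((n - x).choose (F ∩ Finset.Icc (x+1) n).card : ℝ) := by
      exact_mod_cast Nat.choose_pos (hble F hF)
    rw [div_eq_div_iff (mul_pos hC1 hC2).ne' hD.ne']
    have natkey : (Nat.factorial (F ∩ Finset.Icc 1 x).card *
        Nat.factorial (x - (F ∩ Finset.Icc 1 x).card) *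
      (Nat.factorial (F ∩ Finset.Icc (x+1) n).card *
        Nat.factorial ((n - x) - (F ∩ Finset.Icc (x+1) n).card))) *
        (x.choose (F ∩ Finset.Icc 1 x).card *
          (n - x).choose (F ∩ Finset.Icc (x+1) n).card)
        = Nat.factorial x * Nat.factorial (n - x) := by
      rw [← t1, ← t2]; ring
    rw [one_mul]
    exact_mod_cast natkey.symm
  calc ∑ F ∈ 𝓕x, (1 : ℝ) /
        ((x.choose (F ∩ Finset.Icc 1 x).card : ℝ) *
          ((n - x).choose (F \ Finset.Icc 1 x).card : ℝ))
      = ∑ F ∈ 𝓕x, ((Nat.factorial (F ∩ Finset.Icc 1 x).card *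
        Nat.factorial (x - (F ∩ Finset.Icc 1 x).card) *
      (Nat.factorial (F ∩ Finset.Icc (x+1) n).card *
        Nat.factorial ((n - x) - (F ∩ Finset.Icc (x+1) n).card)) : ℕ) : ℝ)
        / ((Nat.factorial x : ℝ) * (Nat.factorial (n - x) : ℝ)) :=
        Finset.sum_congr rfl hterm
    _ = ((∑ F ∈ 𝓕x, (Nat.factorial (F ∩ Finset.Icc 1 x).card *
        Nat.factorial (x - (F ∩ Finset.Icc 1 x).card) *
      (Nat.factorial (F ∩ Finset.Icc (x+1) n).card *
        Nat.factorial ((n - x) - (F ∩ Finset.Icc (x+1) n).card))) : ℕ) : ℝ)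
        / ((Nat.factorial x : ℝ) * (Nat.factorial (n - x) : ℝ)) := by
        rw [← Finset.sum_div, Nat.cast_sum]
    _ ≤ ((q * (Nat.factorial x * Nat.factorial (n - x)) : ℕ) : ℝ)
        / ((Nat.factorial x : ℝ) * (Nat.factorial (n - x) : ℝ)) := by
        gcongr
    _ = q := by
        push_cast
        rw [mul_div_assoc, div_self hD.ne', mul_one]
end

section
/- Fix x ∈ [n], positive integers p ≤ q, a residue r with 0 ≤ r < q, and a permutation π of [n] that maps [x] onto [x]. For 0 ≤ k ≤ n - x with j(x,k) := ⌊(p/q)(n-x-k)⌋ < x, define C(x,k) = {1,...,j(x,k)} ∪ {x+1,...,x+k}. Then any (p,q)-tilted Sperner family with patterns F contains at most one set of the form π(C(x, tq + r)) with t a nonnegative integer and tq + r ≤ n - x. -/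
open Finset

/-- A `(p,q)`-tilted Sperner family with patterns contains at most one set of
the form `π(C(x, tq + r))`. -/
theorem at_most_one_on_chain (n p q x r : ℕ) (hn : 0 < n) (hp : 0 < p) (hpq : p ≤ q)
    (hx : x ∈ Finset.Icc 1 n) (hr : r < q)
    (π : Equiv.Perm ℕ)
    (hπn : ∀ m, m ∈ Finset.Icc 1 n ↔ π m ∈ Finset.Icc 1 n)
    (hπx : ∀ m, m ∈ Finset.Icc 1 x ↔ π m ∈ Finset.Icc 1 x)
    (𝓕 : Finset (Finset ℕ))
    (hsub : ∀ F ∈ 𝓕, F ⊆ Finset.Icc 1 n)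
    (htilt : TiltedSpernerWithPatterns p q 𝓕) :
    let j : ℕ → ℕ := fun k => ⌊(p : ℝ) / (q : ℝ) * ((n - x - k : ℕ) : ℝ)⌋₊
    let C : ℕ → Finset ℕ := fun k => Finset.Icc 1 (j k) ∪ Finset.Icc (x + 1) (x + k)
    ∀ t t' : ℕ, t * q + r ≤ n - x → t' * q + r ≤ n - x →
      j (t * q + r) < x → j (t' * q + r) < x →
      (C (t * q + r)).image π ∈ 𝓕 → (C (t' * q + r)).image π ∈ 𝓕 →
      t = t' := by
  intro j C
  obtain ⟨hx1, hxn⟩ := mem_Icc.mp hx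
  have hq : 0 < q := hp.trans_le hpq
  have hCdef : ∀ k : ℕ, C k = Finset.Icc 1 (j k) ∪ Finset.Icc (x + 1) (x + k) :=
    fun _ => rfl
  have hjeq : ∀ k : ℕ, j k = p * (n - x - k) / q := by
    intro k
    have h0 : j k = ⌊(p : ℝ) / (q : ℝ) * ((n - x - k : ℕ) : ℝ)⌋₊ := rfl
    rw [h0, div_mul_eq_mul_div, ← Nat.cast_mul, Nat.floor_div_natCast, Nat.floor_natCast]
  have key : ∀ t t' : ℕ, t * q + r ≤ n - x → t' * q + r ≤ n - x →
      j (t * q + r) < x → j (t' * q + r) < x →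
      (C (t * q + r)).image π ∈ 𝓕 → (C (t' * q + r)).image π ∈ 𝓕 →
      t < t' → False := by
    intro t t' ht ht' hjt hjt' hF hG hlt
    obtain ⟨D, hDpos, rfl⟩ : ∃ D, 0 < D ∧ t' = t + D := ⟨t' - t, by omega, by omega⟩
    set k := t * q + r with hk
    set k' := (t + D) * q + r with hk'
    obtain ⟨e, hke, heD⟩ : ∃ e, k' = k + e ∧ e = D * q :=
      ⟨D * q, by rw [hk, hk']; ring, rfl⟩
    have hepos : 0 < e := by rw [heD]; exact Nat.mul_pos hDpos hq
    -- difference of the j values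
    obtain ⟨w, hwD⟩ : ∃ w, w = D * p := ⟨_, rfl⟩
    have hjd : j k = j k' + w := by
      rw [hjeq, hjeq]
      have h1 : n - x - k = (n - x - k') + e := by omega
      rw [h1, heD, hwD]
      have h2 : p * ((n - x - k') + D * q) = p * (n - x - k') + D * p * q := by ring
      rw [h2, Nat.add_mul_div_right _ _ hq]
    have hjle : j k' ≤ j k := by omega
    have hkle : k ≤ k' := by omega
    -- the two set differences
    have hC1 : C k' \ C k = Finset.Icc (x + k + 1) (x + k') := by
      ext a
      rw [mem_sdiff, hCdef, hCdef]
      simp only [mem_union, mem_Icc]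
      omega
    have hC2 : C k \ C k' = Finset.Icc (j k' + 1) (j k) := by
      ext a
      rw [mem_sdiff, hCdef, hCdef]
      simp only [mem_union, mem_Icc]
      omega
    -- the two images are distinct
    have hFG : (C k').image π ≠ (C k).image π := by
      intro h
      have hCC : C k' = C k := Finset.image_injective π.injective h
      have hmem : x + k' ∈ C k' := by
        rw [hCdef]; simp only [mem_union, mem_Icc]; omega
      rw [hCC, hCdef] at hmem
      simp only [mem_union, mem_Icc] at hmem
      omega
    -- cardinality condition
    have hcard : p * (((C k').image π) \ ((C k).image π)).card
        = q * (((C k).image π) \ ((C k').image π)).card := by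
      rw [← Finset.image_sdiff _ _ π.injective, ← Finset.image_sdiff _ _ π.injective,
        Finset.card_image_of_injective _ π.injective,
        Finset.card_image_of_injective _ π.injective, hC1, hC2,
        Nat.card_Icc, Nat.card_Icc]
      have h1 : x + k' + 1 - (x + k + 1) = e := by omega
      have h2 : j k + 1 - (j k' + 1) = w := by omega
      rw [h1, h2, heD, hwD]; ring
    -- order condition
    have horder : ∀ f ∈ ((C k').image π) \ ((C k).image π),
        ∀ g ∈ ((C k).image π) \ ((C k').image π), g < f := by
      intro f hf g hg
      rw [← Finset.image_sdiff _ _ π.injective, hC1] at hf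
      rw [← Finset.image_sdiff _ _ π.injective, hC2] at hg
      obtain ⟨b, hb, rfl⟩ := Finset.mem_image.mp hf
      obtain ⟨a, ha, rfl⟩ := Finset.mem_image.mp hg
      rw [mem_Icc] at hb ha
      have hax : π a ∈ Finset.Icc 1 x :=
        (hπx a).mp (mem_Icc.mpr ⟨by omega, by omega⟩)
      have hbn : π b ∈ Finset.Icc 1 n :=
        (hπn b).mp (mem_Icc.mpr ⟨by omega, by omega⟩)
      have hbx : π b ∉ Finset.Icc 1 x := by
        intro h
        have hb2 := (hπx b).mpr h
        rw [mem_Icc] at hb2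
        omega
      rw [mem_Icc] at hax hbn
      simp only [mem_Icc, not_and, not_le] at hbx
      omega
    exact htilt _ hG _ hF hFG ⟨hcard, horder⟩
  intro t t' ht ht' hjt hjt' hF hG
  rcases lt_trichotomy t t' with h | h | h
  · exact (key t t' ht ht' hjt hjt' hF hG h).elim
  · exact h
  · exact (key t' t ht' ht hjt' hjt hG hF h).elim
end

section
/- Let n ≥ 2 and let F ⊆ [n] satisfy | |F ∩ [x]| - ⌊x/2⌋ | ≤ √(n log n) for all x ∈ [n]. If x_F is a (p,q)-cut point of F (p, q positive integers), then |x_F - (p/(p+q))·n| ≤ 8(p+q)/min(p,q) · √(n log n); in particular for p ≤ q, |x_F - (p/(p+q))n| = O(√(n log n)). -/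
/-!
Write `A = |F ∩ [x]|` and `B = |F ∩ (x, n]|`, so that `A + B = |F ∩ [n]|`. Balance at `x` and at `n`
gives `A = x/2 + e₁` and `A + B = n/2 + e₂` with `|eᵢ| ≤ s + 1/2`, where `s = √(n log n)`. The cut
condition says `q A ≤ p (n - x - B) < q (A + 1)`, and `n - x - B = (n - x)/2 + e₁ - e₂`; solving for
`x` leaves `|(p + q) x - p n| ≤ (4 (s + 1/2) + 2)(p + q)`, and `4 s + 4 ≤ 8 s` because `n ≥ 2` forces
`s ≥ 1`.
-/

open Finset Real

theorem card_inter_Icc_add_card_inter_Icc (F : Finset ℕ) {a x n : ℕ} (hax : a ≤ x + 1)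
    (hxn : x ≤ n) : #(F ∩ Icc a x) + #(F ∩ Icc (x + 1) n) = #(F ∩ Icc a n) := by
  have hdisj : Disjoint (F ∩ Icc a x) (F ∩ Icc (x + 1) n) :=
    disjoint_left.mpr fun t ht ht' => by simp only [mem_inter, mem_Icc] at ht ht'; omega
  have hunion : Icc a x ∪ Icc (x + 1) n = Icc a n := by
    ext t; simp only [mem_union, mem_Icc]; omega
  rw [← card_union_of_disjoint hdisj, ← inter_union_distrib_left, hunion]

theorem abs_natCast_div_two_sub_le (x : ℕ) : |((x / 2 : ℕ) : ℝ) - x / 2| ≤ 1 / 2 := by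
  rcases Nat.even_or_odd' x with ⟨k, rfl | rfl⟩
  · norm_num [Nat.mul_div_cancel_left]
  · rw [show (2 * k + 1) / 2 = k by omega, abs_le]
    push_cast
    constructor <;> linarith

theorem abs_sub_half_le_of_abs_sub_div_two_le {a s : ℝ} {x : ℕ}
    (h : |a - ((x / 2 : ℕ) : ℝ)| ≤ s) : |a - x / 2| ≤ s + 1 / 2 :=
  (abs_sub_le _ _ _).trans (add_le_add h (abs_natCast_div_two_sub_le x))

theorem one_le_sqrt_mul_log {x : ℝ} (hx : 2 ≤ x) : 1 ≤ √(x * log x) := by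
  have hlog : log 2 ≤ log x := log_le_log two_pos hx
  rw [one_le_sqrt]
  nlinarith [log_two_gt_d9]

theorem abs_sub_div_add_mul_le_of_cut {p q x n A B t : ℝ} (hp : 0 < p) (hq : 0 < q)
    (hA : |A - x / 2| ≤ t) (hAB : |A + B - n / 2| ≤ t)
    (hlo : A / p ≤ (n - x - B) / q) (hhi : (n - x - B) / q < (A + 1) / p) :
    |x - p / (p + q) * n| ≤ 4 * t + 2 := by
  rw [div_le_div_iff₀ hp hq] at hlo
  rw [div_lt_div_iff₀ hq hp] at hhi
  rw [abs_le] at hA hAB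
  have hpq : 0 < p + q := add_pos hp hq
  have hx : x - p / (p + q) * n = ((p + q) * x - p * n) / (p + q) := by field_simp
  rw [hx, abs_div, abs_of_pos hpq, div_le_iff₀ hpq, abs_le]
  constructor <;>
    nlinarith [mul_le_mul_of_nonneg_left hA.1 hp.le, mul_le_mul_of_nonneg_left hA.2 hp.le,
      mul_le_mul_of_nonneg_left hA.1 hq.le, mul_le_mul_of_nonneg_left hA.2 hq.le,
      mul_le_mul_of_nonneg_left hAB.1 hp.le, mul_le_mul_of_nonneg_left hAB.2 hp.le]

theorem cut_point_location_general (n p q xF : ℕ) (hn : 2 ≤ n) (hp : 0 < p) (hq : 0 < q)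
    (F : Finset ℕ) (hxF : xF ∈ Finset.Icc 1 n)
    (hbal : ∀ x ∈ Finset.Icc 1 n,
      |((F ∩ Finset.Icc 1 x).card : ℝ) - ((x / 2 : ℕ) : ℝ)| ≤
        Real.sqrt ((n : ℝ) * Real.log n))
    (hcut :
      0 ≤ ((n : ℝ) - (xF : ℝ) - ((F ∩ Finset.Icc (xF + 1) n).card : ℝ)) / (q : ℝ)
            - ((F ∩ Finset.Icc 1 xF).card : ℝ) / (p : ℝ) ∧
      ((n : ℝ) - (xF : ℝ) - ((F ∩ Finset.Icc (xF + 1) n).card : ℝ)) / (q : ℝ)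
            - ((F ∩ Finset.Icc 1 xF).card : ℝ) / (p : ℝ) < 1 / (p : ℝ)) :
    |(xF : ℝ) - (p : ℝ) / ((p : ℝ) + (q : ℝ)) * (n : ℝ)| ≤
      8 * ((p : ℝ) + (q : ℝ)) / ((min p q : ℕ) : ℝ) *
        Real.sqrt ((n : ℝ) * Real.log n) := by
  set s := √((n : ℝ) * log n)
  have hs : 1 ≤ s := one_le_sqrt_mul_log (by exact_mod_cast hn)
  have hsplit := card_inter_Icc_add_card_inter_Icc F (Nat.le_add_left 1 xF) (mem_Icc.mp hxF).2
  have hA := abs_sub_half_le_of_abs_sub_div_two_le (hbal xF hxF)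
  have hAB := abs_sub_half_le_of_abs_sub_div_two_le (hbal n (by simp; omega))
  rw [← hsplit, Nat.cast_add] at hAB
  have hloc := abs_sub_div_add_mul_le_of_cut (p := p) (q := q) (by exact_mod_cast hp)
    (by exact_mod_cast hq) hA hAB
    (by linarith [hcut.1]) (by rw [add_div]; linarith [hcut.2])
  have hratio : 1 ≤ ((p : ℝ) + q) / ((min p q : ℕ) : ℝ) := by
    rw [one_le_div (by exact_mod_cast lt_min hp hq)]
    exact_mod_cast (min_le_left p q).trans (Nat.le_add_right p q)
  calc _ ≤ 4 * (s + 1 / 2) + 2 := hloc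
    _ ≤ 8 * s := by linarith
    _ ≤ 8 * (((p : ℝ) + q) / ((min p q : ℕ) : ℝ)) * s := by gcongr; linarith
    _ = _ := by ring

/-- A cut point of a balanced set lies near `(p/(p+q))·n`. -/
theorem cut_point_location (n p q xF : ℕ) (hn : 2 ≤ n) (hp : 0 < p) (hq : 0 < q)
    (F : Finset ℕ) (hF : F ⊆ Finset.Icc 1 n) (hxF : xF ∈ Finset.Icc 1 n)
    (hbal : ∀ x ∈ Finset.Icc 1 n,
      |((F ∩ Finset.Icc 1 x).card : ℝ) - ((x / 2 : ℕ) : ℝ)| ≤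
        Real.sqrt ((n : ℝ) * Real.log n))
    (hcut :
      0 ≤ ((n : ℝ) - (xF : ℝ) - ((F ∩ Finset.Icc (xF + 1) n).card : ℝ)) / (q : ℝ)
            - ((F ∩ Finset.Icc 1 xF).card : ℝ) / (p : ℝ) ∧
      ((n : ℝ) - (xF : ℝ) - ((F ∩ Finset.Icc (xF + 1) n).card : ℝ)) / (q : ℝ)
            - ((F ∩ Finset.Icc 1 xF).card : ℝ) / (p : ℝ) < 1 / (p : ℝ)) :
    |(xF : ℝ) - (p : ℝ) / ((p : ℝ) + (q : ℝ)) * (n : ℝ)| ≤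
      8 * ((p : ℝ) + (q : ℝ)) / ((min p q : ℕ) : ℝ) *
        Real.sqrt ((n : ℝ) * Real.log n) :=
  cut_point_location_general n p q xF hn hp hq F hxF hbal hcut
end

section
/- Let p, q be positive integers with p ≤ q, and F ⊆ P([n]) a (p,q)-tilted Sperner family with patterns. For x ∈ [n], let F_x be the set of members F ∈ F for which x is a chosen (p,q)-cut point of F. Then |F_x| ≤ C · q · 2^n / √(x(n-x)) for an absolute constant C and all 1 ≤ x ≤ n-1. -/
open Finset Real

set_option maxHeartbeats 1600000

lemma centralBinom_sq_le (k : ℕ) : (Nat.centralBinom k)^2 * (3*k+1) ≤ 16^k := by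
  induction k with
  | zero => simp [Nat.centralBinom]
  | succ k ih =>
    have h := Nat.succ_mul_centralBinom_succ k
    have hsq : (k+1)^2 * (Nat.centralBinom (k+1))^2
        = 4*(2*k+1)^2 * (Nat.centralBinom k)^2 := by
      have h2 : ((k+1) * Nat.centralBinom (k+1))^2 = (2*(2*k+1)*Nat.centralBinom k)^2 := by rw [h]
      calc (k+1)^2 * (Nat.centralBinom (k+1))^2 = ((k+1)*Nat.centralBinom (k+1))^2 := by ring
        _ = (2*(2*k+1)*Nat.centralBinom k)^2 := h2
        _ = 4*(2*k+1)^2 * (Nat.centralBinom k)^2 := by ring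
    have hpos : 0 < (k+1)^2 * (3*k+1) := by positivity
    have hmain : ((Nat.centralBinom (k+1))^2 * (3*(k+1)+1)) * ((k+1)^2 * (3*k+1))
        ≤ 16^(k+1) * ((k+1)^2 * (3*k+1)) := by
      have h1 : ((Nat.centralBinom (k+1))^2 * (3*(k+1)+1)) * ((k+1)^2 * (3*k+1))
          = (4*(2*k+1)^2*(3*k+4)) * ((Nat.centralBinom k)^2 * (3*k+1)) := by
        have hr : (Nat.centralBinom (k+1))^2 * (3*(k+1)+1) * ((k+1)^2 * (3*k+1))
            = ((k+1)^2 * (Nat.centralBinom (k+1))^2) * ((3*(k+1)+1) * (3*k+1)) := by ring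
        rw [hr, hsq]; ring
      rw [h1]
      calc (4*(2*k+1)^2*(3*k+4)) * ((Nat.centralBinom k)^2 * (3*k+1))
          ≤ (4*(2*k+1)^2*(3*k+4)) * 16^k := Nat.mul_le_mul_left _ ih
        _ ≤ (16*(k+1)^2*(3*k+1)) * 16^k := by
            apply Nat.mul_le_mul_right
            nlinarith [k.zero_le]
        _ = 16^(k+1) * ((k+1)^2 * (3*k+1)) := by ring
    exact Nat.le_of_mul_le_mul_right hmain hpos

lemma mid_sq_le (m : ℕ) : (m.choose (m/2))^2 * m ≤ 4^m := by
  rcases Nat.even_or_odd m with ⟨k, hk⟩ | ⟨k, hk⟩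
  · subst hk
    have h2 : (k+k)/2 = k := by omega
    rw [h2]
    have : (k+k).choose k = Nat.centralBinom k := by
      rw [Nat.centralBinom]; congr 1; omega
    rw [this]
    calc (Nat.centralBinom k)^2 * (k+k) ≤ (Nat.centralBinom k)^2 * (3*k+1) := by
          apply Nat.mul_le_mul_left; omega
      _ ≤ 16^k := centralBinom_sq_le k
      _ ≤ 4^(k+k) := by rw [show (16:ℕ) = 4^2 by norm_num, ← pow_mul]; apply Nat.pow_le_pow_right <;> omega
  · subst hk
    have h2 : (2*k+1)/2 = k := by omega
    rw [h2]
    have hle : (2*k+1).choose k ≤ 2 * Nat.centralBinom k := by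
      match k with
      | 0 => simp [Nat.centralBinom]
      | (j+1) =>
        have hp : (2*(j+1)+1).choose (j+1) = (2*(j+1)).choose j + (2*(j+1)).choose (j+1) := by
          have := Nat.choose_succ_succ (2*(j+1)) j
          convert this using 2 <;> omega
        rw [hp]
        have hcb : Nat.centralBinom (j+1) = (2*(j+1)).choose (j+1) := rfl
        have h1 : (2*(j+1)).choose j ≤ (2*(j+1)).choose ((2*(j+1))/2) := Nat.choose_le_middle j _
        rw [show (2*(j+1))/2 = j+1 by omega] at h1
        omega
    calc ((2*k+1).choose k)^2 * (2*k+1) ≤ (2*Nat.centralBinom k)^2 * (2*k+1) :=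
          Nat.mul_le_mul_right _ (Nat.pow_le_pow_left hle 2)
      _ = 4 * ((Nat.centralBinom k)^2 * (2*k+1)) := by ring
      _ ≤ 4 * ((Nat.centralBinom k)^2 * (3*k+1)) := by
          apply Nat.mul_le_mul_left; apply Nat.mul_le_mul_left; omega
      _ ≤ 4 * 16^k := Nat.mul_le_mul_left _ (centralBinom_sq_le k)
      _ = 4^(2*k+1) := by rw [show (16:ℕ) = 4^2 by norm_num, ← pow_mul, pow_succ]; ring
  
lemma choose_sqrt_le (m i : ℕ) : (m.choose i : ℝ) * Real.sqrt m ≤ 2^m := by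
  have h1 : m.choose i ≤ m.choose (m/2) := Nat.choose_le_middle i m
  have h2 : ((m.choose (m/2))^2 * m : ℕ) ≤ ((2^m)^2 : ℕ) := by
    calc ((m.choose (m/2))^2 * m : ℕ) ≤ 4^m := mid_sq_le m
      _ = (2^m)^2 := by rw [show (4:ℕ) = 2^2 by norm_num, ← pow_mul, ← pow_mul, Nat.mul_comm]
  have hs : (m.choose i : ℝ) * Real.sqrt m ≤ (m.choose (m/2) : ℝ) * Real.sqrt m := by
    apply mul_le_mul_of_nonneg_right _ (Real.sqrt_nonneg _)
    exact_mod_cast h1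
  refine hs.trans ?_
  have hx : (m.choose (m/2) : ℝ) * Real.sqrt m = Real.sqrt (((m.choose (m/2))^2 * m : ℕ)) := by
    push_cast
    rw [Real.sqrt_mul (by positivity), Real.sqrt_sq (by positivity)]
  rw [hx]
  have : Real.sqrt (((m.choose (m/2))^2 * m : ℕ)) ≤ Real.sqrt (((2^m)^2 : ℕ)) := by
    apply Real.sqrt_le_sqrt; exact_mod_cast h2
  refine this.trans ?_
  push_cast
  rw [Real.sqrt_sq (by positivity)]

def initSeg (m a : ℕ) : Finset (Fin m) := Finset.univ.filter (fun i => (i : ℕ) < a)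

lemma initSeg_mono {m a b : ℕ} (h : a ≤ b) : initSeg m a ⊆ initSeg m b := by
  intro i hi
  simp only [initSeg, Finset.mem_filter, Finset.mem_univ, true_and] at *
  omega

lemma card_initSeg {m a : ℕ} (h : a ≤ m) : (initSeg m a).card = a := by
  have : initSeg m a = (Finset.range a).attachFin (fun v hv => by
      have := Finset.mem_range.mp hv; omega) := by
    ext i
    simp [initSeg, Finset.mem_attachFin, Finset.mem_range]
  rw [this, Finset.card_attachFin, Finset.card_range]

lemma exists_perm_image {m : ℕ} (S T : Finset (Fin m)) (h : S.card = T.card) :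
    ∃ ρ : Equiv.Perm (Fin m), S.image (⇑ρ) = T := by
  classical
  have e : {i // i ∈ S} ≃ {i // i ∈ T} :=
    (S.equivFin.trans (finCongr h)).trans T.equivFin.symm
  refine ⟨e.extendSubtype, ?_⟩
  apply Finset.eq_of_subset_of_card_le
  · intro j hj
    obtain ⟨i, hi, rfl⟩ := Finset.mem_image.mp hj
    exact e.extendSubtype_mem i hi
  · rw [Finset.card_image_of_injective _ (Equiv.injective _), h]

lemma fiber_card (m a : ℕ) (S : Finset (Fin m)) (hS : S.card = a) :
    (Finset.univ.filter (fun σ : Equiv.Perm (Fin m) => (initSeg m a).image ⇑σ = S)).card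
      * m.choose a = m.factorial := by
  classical
  have ham : a ≤ m := by
    have h1 := Finset.card_le_univ S
    simp only [Finset.card_univ, Fintype.card_fin] at h1
    omega
  have himg : ∀ σ : Equiv.Perm (Fin m), ((initSeg m a).image ⇑σ).card = a := by
    intro σ
    rw [Finset.card_image_of_injective _ (Equiv.injective _), card_initSeg ham]
  have hfib : ∀ T : Finset (Fin m), T.card = a →
      (Finset.univ.filter (fun σ : Equiv.Perm (Fin m) => (initSeg m a).image ⇑σ = T)).card
        = (Finset.univ.filter (fun σ : Equiv.Perm (Fin m) => (initSeg m a).image ⇑σ = S)).card := by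
    intro T hT
    obtain ⟨ρ, hρ⟩ := exists_perm_image T S (by rw [hT, hS])
    apply Finset.card_bij (fun σ _ => σ.trans ρ)
    · intro σ hσ
      simp only [Finset.mem_filter, Finset.mem_univ, true_and] at *
      rw [Equiv.coe_trans, ← Finset.image_image, hσ, hρ]
    · intro σ1 h1 σ2 h2 heq
      have h3 := congrArg (fun ρ' : Equiv.Perm (Fin m) => ρ'.trans ρ.symm) heq
      simp only [Equiv.trans_assoc] at h3
      simpa [Equiv.trans_assoc, Equiv.self_trans_symm] using h3
    · intro σ hσ
      refine ⟨σ.trans ρ.symm, ?_, by ext i; simp⟩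
      simp only [Finset.mem_filter, Finset.mem_univ, true_and] at *
      rw [Equiv.coe_trans, ← Finset.image_image, hσ, ← hρ, Finset.image_image]
      ext j
      simp
  have hpart : (Finset.univ : Finset (Equiv.Perm (Fin m))).card
      = ∑ T ∈ Finset.powersetCard a (Finset.univ : Finset (Fin m)),
        (Finset.univ.filter (fun σ : Equiv.Perm (Fin m) => (initSeg m a).image ⇑σ = T)).card := by
    apply Finset.card_eq_sum_card_fiberwise
    intro σ _
    rw [Finset.mem_coe, Finset.mem_powersetCard]
    exact ⟨Finset.subset_univ _, himg σ⟩
  have hconst : ∑ T ∈ Finset.powersetCard a (Finset.univ : Finset (Fin m)),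
        (Finset.univ.filter (fun σ : Equiv.Perm (Fin m) => (initSeg m a).image ⇑σ = T)).card
      = m.choose a *
        (Finset.univ.filter (fun σ : Equiv.Perm (Fin m) => (initSeg m a).image ⇑σ = S)).card := by
    rw [Finset.sum_congr rfl (fun T hT => hfib T (Finset.mem_powersetCard.mp hT).2),
      Finset.sum_const, smul_eq_mul, Finset.card_powersetCard, Finset.card_univ, Fintype.card_fin]
  rw [mul_comm, ← hconst, ← hpart, Finset.card_univ, Fintype.card_perm, Fintype.card_fin]

lemma key_eq {p q y aF bF aG bG : ℕ} (hq : 0 < q)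
    (hbF : bF ≤ y) (hbG : bG ≤ y)
    (h1F : q * aF ≤ p * (y - bF)) (h2F : p * (y - bF) < q * (aF + 1))
    (h1G : q * aG ≤ p * (y - bG)) (h2G : p * (y - bG) < q * (aG + 1))
    (hmod : bF % q = bG % q) (ha : aF ≤ aG) (hb : bG ≤ bF) :
    p * (bF - bG) = q * (aG - aF) := by
  have hdvd : (q:ℤ) ∣ (bF:ℤ) - bG := by
    have h := (Nat.modEq_iff_dvd (n := q)).mp hmod.symm
    -- hmod.symm : bG ≡ bF [MOD q], so q ∣ bF - bG
    exact_mod_cast h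
  zify [hbF, hbG] at h1F h2F h1G h2G
  set d : ℤ := p * ((bF:ℤ) - bG) - q * ((aG:ℤ) - aF) with hd
  have hdvd2 : (q:ℤ) ∣ d := by
    apply dvd_sub
    · exact Dvd.dvd.mul_left hdvd p
    · exact Dvd.dvd.mul_right dvd_rfl _
  have hlt : d < q ∧ -(q:ℤ) < d := by
    constructor <;> [nlinarith; nlinarith]
  obtain ⟨k, hk⟩ := hdvd2
  have hk0 : k = 0 := by
    rcases lt_trichotomy k 0 with h | h | h
    · exfalso; nlinarith [hlt.2]
    · exact h
    · exfalso; nlinarith [hlt.1]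
  have hd0 : d = 0 := by rw [hk, hk0, mul_zero]
  have : (p:ℤ) * ((bF:ℤ) - bG) = q * ((aG:ℤ) - aF) := by linarith [hd0]
  zify [hb, ha]
  linarith [this]

lemma key_lt {p q y aF bF aG bG : ℕ} (hp : 0 < p) (hq : 0 < q)
    (hbG : bG ≤ y)
    (h2F : p * (y - bF) < q * (aF + 1))
    (h1G : q * aG ≤ p * (y - bG))
    (hmod : bF % q = bG % q) (ha : aF ≤ aG) (hb : bF < bG) : False := by
  have hdvd : q ∣ bG - bF := (Nat.modEq_iff_dvd' (le_of_lt hb)).mp hmod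
  have hge : q ≤ bG - bF := Nat.le_of_dvd (by omega) hdvd
  have hsplit : y - bF = (y - bG) + (bG - bF) := by omega
  have h1 : p * (y - bF) = p * (y - bG) + p * (bG - bF) := by rw [hsplit, Nat.mul_add]
  have h2 : q ≤ p * (bG - bF) := by
    calc q = 1 * q := (one_mul q).symm
      _ ≤ p * (bG - bF) := Nat.mul_le_mul hp hge
  have h3 : q * aF ≤ q * aG := Nat.mul_le_mul_left q ha
  have h4 : q * (aF + 1) = q * aF + q := by ring
  omega

lemma sdiff_eq_upper {n x : ℕ} {F G : Finset ℕ} (hF : F ⊆ Finset.Icc 1 n)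
    (hL : F ∩ Finset.Icc 1 x ⊆ G ∩ Finset.Icc 1 x) :
    F \ G = (F ∩ Finset.Icc (x+1) n) \ (G ∩ Finset.Icc (x+1) n) := by
  ext w
  simp only [Finset.mem_sdiff, Finset.mem_inter, Finset.mem_Icc]
  constructor
  · rintro ⟨hwF, hwG⟩
    have hw := hF hwF; rw [Finset.mem_Icc] at hw
    have hx1 : x + 1 ≤ w := by
      by_contra hc
      have hmem : w ∈ G ∩ Finset.Icc 1 x :=
        hL (Finset.mem_inter.mpr ⟨hwF, Finset.mem_Icc.mpr ⟨hw.1, by omega⟩⟩)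
      exact hwG (Finset.mem_inter.mp hmem).1
    exact ⟨⟨hwF, hx1, hw.2⟩, fun h => hwG h.1⟩
  · rintro ⟨⟨hwF, hw1, hw2⟩, h2⟩
    exact ⟨hwF, fun hwG => h2 ⟨hwG, hw1, hw2⟩⟩

lemma sdiff_eq_lower {n x : ℕ} {F G : Finset ℕ} (hG : G ⊆ Finset.Icc 1 n)
    (hU : G ∩ Finset.Icc (x+1) n ⊆ F ∩ Finset.Icc (x+1) n) :
    G \ F = (G ∩ Finset.Icc 1 x) \ (F ∩ Finset.Icc 1 x) := by
  ext w
  simp only [Finset.mem_sdiff, Finset.mem_inter, Finset.mem_Icc]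
  constructor
  · rintro ⟨hwG, hwF⟩
    have hw := hG hwG; rw [Finset.mem_Icc] at hw
    have hx1 : w ≤ x := by
      by_contra hc
      have hmem : w ∈ F ∩ Finset.Icc (x+1) n :=
        hU (Finset.mem_inter.mpr ⟨hwG, Finset.mem_Icc.mpr ⟨by omega, hw.2⟩⟩)
      exact hwF (Finset.mem_inter.mp hmem).1
    exact ⟨⟨hwG, hw.1, hx1⟩, fun h => hwF h.1⟩
  · rintro ⟨⟨hwG, hw1, hw2⟩, h2⟩
    exact ⟨hwG, fun hwF => h2 ⟨hwF, hw1, hw2⟩⟩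


section Trace
variable {m : ℕ} {s : Finset ℕ} {e : Fin m → ℕ}

def trace (e : Fin m → ℕ) (F : Finset ℕ) : Finset (Fin m) :=
  Finset.univ.filter (fun i => e i ∈ F)

lemma card_trace (he_inj : Function.Injective e) (he_mem : ∀ i, e i ∈ s)
    (he_surj : ∀ w ∈ s, ∃ i, e i = w) (F : Finset ℕ) :
    (trace e F).card = (F ∩ s).card := by
  apply Finset.card_bij (fun i _ => e i)
  · intro i hi
    simp only [trace, Finset.mem_filter] at hi
    exact Finset.mem_inter.mpr ⟨hi.2, he_mem i⟩
  · intro i _ j _ hij; exact he_inj hij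
  · intro w hw
    obtain ⟨hwF, hws⟩ := Finset.mem_inter.mp hw
    obtain ⟨i, rfl⟩ := he_surj w hws
    exact ⟨i, by simp [trace, hwF], rfl⟩

lemma inter_subset_of_trace_subset (he_surj : ∀ w ∈ s, ∃ i, e i = w) {F G : Finset ℕ}
    (h : trace e F ⊆ trace e G) : F ∩ s ⊆ G ∩ s := by
  intro w hw
  obtain ⟨hwF, hws⟩ := Finset.mem_inter.mp hw
  obtain ⟨i, rfl⟩ := he_surj w hws
  have hi : i ∈ trace e F := by simp [trace, hwF]
  have := h hi
  simp only [trace, Finset.mem_filter] at this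
  exact Finset.mem_inter.mpr ⟨this.2, hws⟩

end Trace

lemma cut_nat {n p q x : ℕ} (hp : 0 < p) (hq : 0 < q) (hxn : x ≤ n) {F : Finset ℕ}
    (h1 : 0 ≤ ((n : ℝ) - (x : ℝ) - ((F ∩ Finset.Icc (x + 1) n).card : ℝ)) / (q : ℝ)
            - ((F ∩ Finset.Icc 1 x).card : ℝ) / (p : ℝ))
    (h2 : ((n : ℝ) - (x : ℝ) - ((F ∩ Finset.Icc (x + 1) n).card : ℝ)) / (q : ℝ)
            - ((F ∩ Finset.Icc 1 x).card : ℝ) / (p : ℝ) < 1 / (p : ℝ)) :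
    (F ∩ Finset.Icc (x+1) n).card ≤ n - x ∧
    q * (F ∩ Finset.Icc 1 x).card ≤ p * ((n - x) - (F ∩ Finset.Icc (x+1) n).card) ∧
    p * ((n - x) - (F ∩ Finset.Icc (x+1) n).card) < q * ((F ∩ Finset.Icc 1 x).card + 1) := by
  set a := (F ∩ Finset.Icc 1 x).card with hadef
  set b := (F ∩ Finset.Icc (x+1) n).card with hbdef
  have hpR : (0:ℝ) < p := by exact_mod_cast hp
  have hqR : (0:ℝ) < q := by exact_mod_cast hq
  have hyx : (n : ℝ) - (x : ℝ) = ((n - x : ℕ) : ℝ) := by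
    push_cast [hxn]; ring
  have hby : b ≤ n - x := by
    have hsub : F ∩ Finset.Icc (x+1) n ⊆ Finset.Icc (x+1) n := Finset.inter_subset_right
    have := Finset.card_le_card hsub
    rw [Nat.card_Icc] at this
    omega
  refine ⟨hby, ?_, ?_⟩
  · -- from h1 : a/p ≤ ((n-x) - b)/q
    have h1' : (a : ℝ) / p ≤ (((n - x) : ℕ) - (b:ℝ)) / q := by rw [← hyx]; linarith
    have h1'' : (a : ℝ) * q ≤ (((n-x):ℕ) - (b:ℝ)) * p := by
      rw [div_le_div_iff₀ hpR hqR] at h1'; linarith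
    have hcast : (((n-x):ℕ) : ℝ) - (b:ℝ) = (((n-x) - b : ℕ) : ℝ) := by push_cast [hby]; ring
    rw [hcast] at h1''
    have hr : ((q * a : ℕ) : ℝ) ≤ ((p * ((n-x) - b) : ℕ) : ℝ) := by push_cast; linarith [h1'']
    exact_mod_cast hr
  · have h2' : (((n-x):ℕ) - (b:ℝ)) / q < ((a:ℝ) + 1) / p := by
      rw [← hyx]
      have : ((a:ℝ)+1)/p = a/p + 1/p := by field_simp
      rw [this]; linarith
    have h2'' : (((n-x):ℕ) - (b:ℝ)) * p < ((a:ℝ)+1) * q := by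
      rw [div_lt_div_iff₀ hqR hpR] at h2'; linarith
    have hcast : (((n-x):ℕ) : ℝ) - (b:ℝ) = (((n-x) - b : ℕ) : ℝ) := by push_cast [hby]; ring
    rw [hcast] at h2''
    have hr : ((p * ((n-x) - b) : ℕ) : ℝ) < ((q * (a + 1) : ℕ) : ℝ) := by push_cast; linarith [h2'']
    exact_mod_cast hr

lemma key_contra {p q n x : ℕ} {𝓕 : Finset (Finset ℕ)} (hp : 0 < p) (hq : 0 < q)
    (hT : TiltedSpernerWithPatterns p q 𝓕)
    {F G : Finset ℕ} (hF : F ∈ 𝓕) (hG : G ∈ 𝓕) (hne : F ≠ G)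
    (hFs : F ⊆ Finset.Icc 1 n) (hGs : G ⊆ Finset.Icc 1 n)
    (hcF1 : q * (F ∩ Finset.Icc 1 x).card
        ≤ p * ((n - x) - (F ∩ Finset.Icc (x+1) n).card))
    (hcF2 : p * ((n - x) - (F ∩ Finset.Icc (x+1) n).card)
        < q * ((F ∩ Finset.Icc 1 x).card + 1))
    (hcG1 : q * (G ∩ Finset.Icc 1 x).card
        ≤ p * ((n - x) - (G ∩ Finset.Icc (x+1) n).card))
    (hcG2 : p * ((n - x) - (G ∩ Finset.Icc (x+1) n).card)
        < q * ((G ∩ Finset.Icc 1 x).card + 1))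
    (hbFy : (F ∩ Finset.Icc (x+1) n).card ≤ n - x)
    (hbGy : (G ∩ Finset.Icc (x+1) n).card ≤ n - x)
    (hmod : (F ∩ Finset.Icc (x+1) n).card % q = (G ∩ Finset.Icc (x+1) n).card % q)
    (hAL : F ∩ Finset.Icc 1 x ⊆ G ∩ Finset.Icc 1 x)
    (hBU : G ∩ Finset.Icc (x+1) n ⊆ F ∩ Finset.Icc (x+1) n) : False := by
  have ha : (F ∩ Finset.Icc 1 x).card ≤ (G ∩ Finset.Icc 1 x).card := Finset.card_le_card hAL
  have hb : (G ∩ Finset.Icc (x+1) n).card ≤ (F ∩ Finset.Icc (x+1) n).card :=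
    Finset.card_le_card hBU
  have heq := key_eq hq hbFy hbGy hcF1 hcF2 hcG1 hcG2 hmod ha hb
  have hFG : F \ G = (F ∩ Finset.Icc (x+1) n) \ (G ∩ Finset.Icc (x+1) n) :=
    sdiff_eq_upper hFs hAL
  have hGF : G \ F = (G ∩ Finset.Icc 1 x) \ (F ∩ Finset.Icc 1 x) :=
    sdiff_eq_lower hGs hBU
  apply hT F hF G hG hne
  constructor
  · rw [hFG, hGF, Finset.card_sdiff_of_subset hBU, Finset.card_sdiff_of_subset hAL]
    exact heq
  · intro f hf g hg
    rw [hFG] at hf; rw [hGF] at hg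
    have hf2 := (Finset.mem_inter.mp (Finset.mem_sdiff.mp hf).1).2
    have hg2 := (Finset.mem_inter.mp (Finset.mem_sdiff.mp hg).1).2
    rw [Finset.mem_Icc] at hf2 hg2
    omega

/-- If two distinct members of the family with the same residue are captured by the same
pair of permutations, we get a contradiction. This version assumes `aF ≤ aG`. -/
lemma capture_contra_aux {p q n x y : ℕ} {𝓕 : Finset (Finset ℕ)} (hp : 0 < p) (hq : 0 < q)
    (hy : y = n - x)
    (hT : TiltedSpernerWithPatterns p q 𝓕)
    {eL : Fin x → ℕ} {eU : Fin y → ℕ}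
    (heL_surj : ∀ w ∈ Finset.Icc 1 x, ∃ i, eL i = w)
    (heU_surj : ∀ w ∈ Finset.Icc (x+1) n, ∃ i, eU i = w)
    {F G : Finset ℕ} (hF : F ∈ 𝓕) (hG : G ∈ 𝓕) (hne : F ≠ G)
    (hFs : F ⊆ Finset.Icc 1 n) (hGs : G ⊆ Finset.Icc 1 n)
    (hcF1 : q * (F ∩ Finset.Icc 1 x).card
        ≤ p * ((n - x) - (F ∩ Finset.Icc (x+1) n).card))
    (hcF2 : p * ((n - x) - (F ∩ Finset.Icc (x+1) n).card)
        < q * ((F ∩ Finset.Icc 1 x).card + 1))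
    (hcG1 : q * (G ∩ Finset.Icc 1 x).card
        ≤ p * ((n - x) - (G ∩ Finset.Icc (x+1) n).card))
    (hcG2 : p * ((n - x) - (G ∩ Finset.Icc (x+1) n).card)
        < q * ((G ∩ Finset.Icc 1 x).card + 1))
    (hbFy : (F ∩ Finset.Icc (x+1) n).card ≤ n - x)
    (hbGy : (G ∩ Finset.Icc (x+1) n).card ≤ n - x)
    (hmod : (F ∩ Finset.Icc (x+1) n).card % q = (G ∩ Finset.Icc (x+1) n).card % q)
    (ha : (F ∩ Finset.Icc 1 x).card ≤ (G ∩ Finset.Icc 1 x).card)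
    {σ : Equiv.Perm (Fin x)} {τ : Equiv.Perm (Fin y)}
    (hσF : (initSeg x (F ∩ Finset.Icc 1 x).card).image ⇑σ = trace eL F)
    (hσG : (initSeg x (G ∩ Finset.Icc 1 x).card).image ⇑σ = trace eL G)
    (hτF : (initSeg y (F ∩ Finset.Icc (x+1) n).card).image ⇑τ = trace eU F)
    (hτG : (initSeg y (G ∩ Finset.Icc (x+1) n).card).image ⇑τ = trace eU G) : False := by
  have hAL : F ∩ Finset.Icc 1 x ⊆ G ∩ Finset.Icc 1 x := by
    apply inter_subset_of_trace_subset heL_surj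
    rw [← hσF, ← hσG]
    exact Finset.image_subset_image (initSeg_mono ha)
  rcases le_or_gt (G ∩ Finset.Icc (x+1) n).card (F ∩ Finset.Icc (x+1) n).card with hb | hb
  · have hBU : G ∩ Finset.Icc (x+1) n ⊆ F ∩ Finset.Icc (x+1) n := by
      apply inter_subset_of_trace_subset heU_surj
      rw [← hτF, ← hτG]
      exact Finset.image_subset_image (initSeg_mono hb)
    exact key_contra hp hq hT hF hG hne hFs hGs hcF1 hcF2 hcG1 hcG2 hbFy hbGy hmod hAL hBU
  · exact key_lt hp hq hbGy hcF2 hcG1 hmod ha hb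

lemma class_bound {n p q x y r : ℕ} {𝓕 𝓖 : Finset (Finset ℕ)} (hp : 0 < p) (hq : 0 < q)
    (hx1 : 1 ≤ x) (hxn : x ≤ n - 1) (hy : y = n - x)
    (hT : TiltedSpernerWithPatterns p q 𝓕)
    (hsub : 𝓖 ⊆ 𝓕)
    (hGs : ∀ F ∈ 𝓖, F ⊆ Finset.Icc 1 n)
    (hcut : ∀ F ∈ 𝓖,
      (F ∩ Finset.Icc (x+1) n).card ≤ n - x ∧
      q * (F ∩ Finset.Icc 1 x).card ≤ p * ((n - x) - (F ∩ Finset.Icc (x+1) n).card) ∧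
      p * ((n - x) - (F ∩ Finset.Icc (x+1) n).card) < q * ((F ∩ Finset.Icc 1 x).card + 1))
    (hmodr : ∀ F ∈ 𝓖, (F ∩ Finset.Icc (x+1) n).card % q = r) :
    (𝓖.card : ℝ) ≤ 2^n / Real.sqrt ((x:ℝ) * (y:ℝ)) := by
  classical
  have hn2 : 2 ≤ n := by omega
  have hy1 : 1 ≤ y := by omega
  have hxn' : x ≤ n := by omega
  have hLcard : (Finset.Icc 1 x).card = x := by rw [Nat.card_Icc]; omega
  have hUcard : (Finset.Icc (x+1) n).card = y := by rw [Nat.card_Icc]; omega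
  set eL : Fin x → ℕ := fun i => ((Finset.Icc 1 x).orderIsoOfFin hLcard i : ℕ) with heL
  set eU : Fin y → ℕ := fun i => ((Finset.Icc (x+1) n).orderIsoOfFin hUcard i : ℕ) with heU
  have heL_inj : Function.Injective eL := fun a b hab => by
    have := Subtype.val_injective hab
    exact ((Finset.Icc 1 x).orderIsoOfFin hLcard).injective this
  have heU_inj : Function.Injective eU := fun a b hab => by
    have := Subtype.val_injective hab
    exact ((Finset.Icc (x+1) n).orderIsoOfFin hUcard).injective this
  have heL_mem : ∀ i, eL i ∈ Finset.Icc 1 x := fun i =>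
    (((Finset.Icc 1 x).orderIsoOfFin hLcard) i).2
  have heU_mem : ∀ i, eU i ∈ Finset.Icc (x+1) n := fun i =>
    (((Finset.Icc (x+1) n).orderIsoOfFin hUcard) i).2
  have heL_surj : ∀ w ∈ Finset.Icc 1 x, ∃ i, eL i = w := by
    intro w hw
    exact ⟨((Finset.Icc 1 x).orderIsoOfFin hLcard).symm ⟨w, hw⟩,
      congrArg Subtype.val (((Finset.Icc 1 x).orderIsoOfFin hLcard).apply_symm_apply ⟨w, hw⟩)⟩
  have heU_surj : ∀ w ∈ Finset.Icc (x+1) n, ∃ i, eU i = w := by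
    intro w hw
    exact ⟨((Finset.Icc (x+1) n).orderIsoOfFin hUcard).symm ⟨w, hw⟩,
      congrArg Subtype.val (((Finset.Icc (x+1) n).orderIsoOfFin hUcard).apply_symm_apply ⟨w, hw⟩)⟩
  set capA : Finset ℕ → Finset (Equiv.Perm (Fin x)) := fun F =>
    Finset.univ.filter
      (fun σ => (initSeg x (F ∩ Finset.Icc 1 x).card).image ⇑σ = trace eL F) with hcapA
  set capB : Finset ℕ → Finset (Equiv.Perm (Fin y)) := fun F =>
    Finset.univ.filter
      (fun τ => (initSeg y (F ∩ Finset.Icc (x+1) n).card).image ⇑τ = trace eU F) with hcapB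
  set capset : Finset ℕ → Finset (Equiv.Perm (Fin x) × Equiv.Perm (Fin y)) := fun F =>
    capA F ×ˢ capB F with hcapset
  have hcardA : ∀ F : Finset ℕ, (capA F).card * x.choose (F ∩ Finset.Icc 1 x).card
      = x.factorial := by
    intro F
    exact fiber_card x _ (trace eL F) (card_trace heL_inj heL_mem heL_surj F)
  have hcardB : ∀ F : Finset ℕ, (capB F).card * y.choose (F ∩ Finset.Icc (x+1) n).card
      = y.factorial := by
    intro F
    exact fiber_card y _ (trace eU F) (card_trace heU_inj heU_mem heU_surj F)
  -- disjointness
  have hdisj : ∀ F ∈ 𝓖, ∀ G ∈ 𝓖, F ≠ G → Disjoint (capset F) (capset G) := by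
    intro F hF G hG hne
    rw [Finset.disjoint_left]
    rintro ⟨σ, τ⟩ hm1 hm2
    rw [hcapset] at hm1 hm2
    simp only [Finset.mem_product, hcapA, hcapB, Finset.mem_filter, Finset.mem_univ,
      true_and] at hm1 hm2
    have hmodFG : (F ∩ Finset.Icc (x+1) n).card % q = (G ∩ Finset.Icc (x+1) n).card % q := by
      rw [hmodr F hF, hmodr G hG]
    rcases le_total (F ∩ Finset.Icc 1 x).card (G ∩ Finset.Icc 1 x).card with ha | ha
    · exact capture_contra_aux hp hq hy hT heL_surj heU_surj (hsub hF) (hsub hG) hne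
        (hGs F hF) (hGs G hG) (hcut F hF).2.1 (hcut F hF).2.2 (hcut G hG).2.1 (hcut G hG).2.2
        (hcut F hF).1 (hcut G hG).1 hmodFG ha hm1.1 hm2.1 hm1.2 hm2.2
    · exact capture_contra_aux hp hq hy hT heL_surj heU_surj (hsub hG) (hsub hF) hne.symm
        (hGs G hG) (hGs F hF) (hcut G hG).2.1 (hcut G hG).2.2 (hcut F hF).2.1 (hcut F hF).2.2
        (hcut G hG).1 (hcut F hF).1 hmodFG.symm ha hm2.1 hm1.1 hm2.2 hm1.2
  have hsum : ∑ F ∈ 𝓖, (capset F).card ≤ x.factorial * y.factorial := by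
    rw [← Finset.card_biUnion hdisj]
    calc (𝓖.biUnion capset).card
        ≤ Fintype.card (Equiv.Perm (Fin x) × Equiv.Perm (Fin y)) := Finset.card_le_univ _
      _ = x.factorial * y.factorial := by
          simp [Fintype.card_prod, Fintype.card_perm, Fintype.card_fin]
  -- real arithmetic
  set S : ℝ := Real.sqrt ((x:ℝ) * (y:ℝ)) with hS
  have hSpos : 0 < S := by
    apply Real.sqrt_pos.mpr
    have : (1:ℝ) ≤ (x:ℝ) := by exact_mod_cast hx1
    have : (1:ℝ) ≤ (y:ℝ) := by exact_mod_cast hy1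
    nlinarith
  set R : ℝ := 2^n / S with hR
  have hxy : x + y = n := by omega
  have hchoose : ∀ F : Finset ℕ,
      ((x.choose (F ∩ Finset.Icc 1 x).card : ℝ) * (y.choose (F ∩ Finset.Icc (x+1) n).card : ℝ))
        ≤ R := by
    intro F
    have c1 := choose_sqrt_le x (F ∩ Finset.Icc 1 x).card
    have c2 := choose_sqrt_le y (F ∩ Finset.Icc (x+1) n).card
    have hprod : ((x.choose (F ∩ Finset.Icc 1 x).card : ℝ)
        * (y.choose (F ∩ Finset.Icc (x+1) n).card : ℝ)) * S ≤ 2^n := by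
      have hsqrt : Real.sqrt (x:ℝ) * Real.sqrt (y:ℝ) = S := by
        rw [hS, Real.sqrt_mul (by positivity)]
      have h2n : (2:ℝ)^x * 2^y = 2^n := by rw [← pow_add, hxy]
      calc ((x.choose (F ∩ Finset.Icc 1 x).card : ℝ)
            * (y.choose (F ∩ Finset.Icc (x+1) n).card : ℝ)) * S
          = ((x.choose (F ∩ Finset.Icc 1 x).card : ℝ) * Real.sqrt (x:ℝ))
            * ((y.choose (F ∩ Finset.Icc (x+1) n).card : ℝ) * Real.sqrt (y:ℝ)) := by
            rw [← hsqrt]; ring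
        _ ≤ 2^x * 2^y := by
            apply mul_le_mul c1 c2 (by positivity) (by positivity)
        _ = 2^n := h2n
    rw [hR, le_div_iff₀ hSpos]
    exact hprod
  have hKpos : (0:ℝ) < ((x.factorial * y.factorial : ℕ) : ℝ) := by
    have := Nat.factorial_pos x
    have := Nat.factorial_pos y
    positivity
  have hmain : (𝓖.card : ℝ) * ((x.factorial * y.factorial : ℕ) : ℝ)
      ≤ R * ((x.factorial * y.factorial : ℕ) : ℝ) := by
    have hstep : ∀ F ∈ 𝓖, ((x.factorial * y.factorial : ℕ) : ℝ)
        = ((capset F).card : ℝ) * ((x.choose (F ∩ Finset.Icc 1 x).card : ℝ)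
            * (y.choose (F ∩ Finset.Icc (x+1) n).card : ℝ)) := by
      intro F _
      have hA := hcardA F
      have hB := hcardB F
      have hcs : (capset F).card = (capA F).card * (capB F).card := by
        rw [hcapset]; exact Finset.card_product _ _
      have : (capset F).card * (x.choose (F ∩ Finset.Icc 1 x).card
          * y.choose (F ∩ Finset.Icc (x+1) n).card) = x.factorial * y.factorial := by
        rw [hcs]
        calc (capA F).card * (capB F).card
              * (x.choose (F ∩ Finset.Icc 1 x).card * y.choose (F ∩ Finset.Icc (x+1) n).card)
            = ((capA F).card * x.choose (F ∩ Finset.Icc 1 x).card)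
              * ((capB F).card * y.choose (F ∩ Finset.Icc (x+1) n).card) := by ring
          _ = x.factorial * y.factorial := by rw [hA, hB]
      rw [← this]
      push_cast
      ring
    calc (𝓖.card : ℝ) * ((x.factorial * y.factorial : ℕ) : ℝ)
        = ∑ F ∈ 𝓖, ((x.factorial * y.factorial : ℕ) : ℝ) := by
          rw [Finset.sum_const, nsmul_eq_mul]
      _ = ∑ F ∈ 𝓖, ((capset F).card : ℝ) * ((x.choose (F ∩ Finset.Icc 1 x).card : ℝ)
            * (y.choose (F ∩ Finset.Icc (x+1) n).card : ℝ)) :=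
          Finset.sum_congr rfl hstep
      _ ≤ ∑ F ∈ 𝓖, ((capset F).card : ℝ) * R := by
          apply Finset.sum_le_sum
          intro F hF
          exact mul_le_mul_of_nonneg_left (hchoose F) (by positivity)
      _ = R * ∑ F ∈ 𝓖, ((capset F).card : ℝ) := by rw [← Finset.sum_mul]; ring
      _ ≤ R * ((x.factorial * y.factorial : ℕ) : ℝ) := by
          apply mul_le_mul_of_nonneg_left _ (by positivity)
          rw [← Nat.cast_sum]
          exact_mod_cast hsum
  have := le_of_mul_le_mul_right hmain hKpos
  exact this

/-- The subfamily with cut point `x` has size `O(q · 2^n / √(x(n-x)))`. -/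
theorem card_Fx_bound :
    ∃ C : ℝ, ∀ n p q x : ℕ, 0 < p → p ≤ q → 1 ≤ x → x ≤ n - 1 →
      ∀ 𝓕 𝓕x : Finset (Finset ℕ),
        (∀ F ∈ 𝓕, F ⊆ Finset.Icc 1 n) →
        TiltedSpernerWithPatterns p q 𝓕 →
        𝓕x ⊆ 𝓕 →
        (∀ F ∈ 𝓕x,
          0 ≤ ((n : ℝ) - (x : ℝ) - ((F ∩ Finset.Icc (x + 1) n).card : ℝ)) / (q : ℝ)
                - ((F ∩ Finset.Icc 1 x).card : ℝ) / (p : ℝ) ∧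
          ((n : ℝ) - (x : ℝ) - ((F ∩ Finset.Icc (x + 1) n).card : ℝ)) / (q : ℝ)
                - ((F ∩ Finset.Icc 1 x).card : ℝ) / (p : ℝ) < 1 / (p : ℝ)) →
        (𝓕x.card : ℝ) ≤
          C * (q : ℝ) * 2 ^ n / Real.sqrt ((x : ℝ) * ((n : ℝ) - (x : ℝ))) := by
  classical
  refine ⟨4, ?_⟩
  intro n p q x hp hpq hx1 hxn 𝓕 𝓕x h𝓕s hT hsub hcut
  have hq : 0 < q := lt_of_lt_of_le hp hpq
  have hn2 : 2 ≤ n := by omega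
  have hxn' : x ≤ n := by omega
  set y := n - x with hy
  have hy1 : 1 ≤ y := by omega
  -- partition by residue of upper trace cardinality mod q
  have hpart : 𝓕x.card = ∑ r ∈ Finset.range q,
      (𝓕x.filter (fun F => (F ∩ Finset.Icc (x+1) n).card % q = r)).card := by
    apply Finset.card_eq_sum_card_fiberwise
    intro F _
    exact Finset.mem_range.mpr (Nat.mod_lt _ hq)
  set S : ℝ := Real.sqrt ((x:ℝ) * (y:ℝ)) with hS
  have hSpos : 0 < S := by
    apply Real.sqrt_pos.mpr
    have h1 : (1:ℝ) ≤ (x:ℝ) := by exact_mod_cast hx1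
    have h2 : (1:ℝ) ≤ (y:ℝ) := by exact_mod_cast hy1
    nlinarith
  have hclass : ∀ r ∈ Finset.range q,
      (((𝓕x.filter (fun F => (F ∩ Finset.Icc (x+1) n).card % q = r)).card : ℕ) : ℝ)
        ≤ 2^n / S := by
    intro r _
    apply class_bound hp hq hx1 hxn hy hT
    · exact (Finset.filter_subset _ _).trans hsub
    · intro F hF
      exact h𝓕s F (hsub (Finset.mem_of_mem_filter F hF))
    · intro F hF
      have hc := hcut F (Finset.mem_of_mem_filter F hF)
      exact cut_nat hp hq hxn' hc.1 hc.2
    · intro F hF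
      exact (Finset.mem_filter.mp hF).2
  have hsum : (𝓕x.card : ℝ) ≤ (q : ℝ) * (2^n / S) := by
    rw [hpart]
    push_cast
    calc ∑ r ∈ Finset.range q,
          (((𝓕x.filter (fun F => (F ∩ Finset.Icc (x+1) n).card % q = r)).card : ℕ) : ℝ)
        ≤ ∑ _r ∈ Finset.range q, (2^n / S) := Finset.sum_le_sum hclass
      _ = (q : ℝ) * (2^n / S) := by rw [Finset.sum_const, Finset.card_range, nsmul_eq_mul]
  have hSeq : Real.sqrt ((x : ℝ) * ((n : ℝ) - (x : ℝ))) = S := by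
    rw [hS]
    congr 1
    congr 1
    rw [hy]
    push_cast [hxn']
    ring
  rw [hSeq]
  refine hsum.trans ?_
  have h1 : (q:ℝ) * (2^n / S) = (q * 2^n) / S := by ring
  have h2 : (4:ℝ) * q * 2^n / S = (4 * q * 2^n) / S := by ring
  rw [h1, h2]
  gcongr
  have hq' : (1:ℝ) ≤ (q:ℝ) := by exact_mod_cast hq
  nlinarith [pow_pos (show (0:ℝ) < 2 by norm_num) n]
end

section
/- Let F be a family of subsets of [n] such that there are no distinct F, G ∈ F with every element of F\G greater than every element of G\F (a (0,0)-tilted Sperner family with patterns, defined by condition (ii) only). Then |F| = O(2^n / n). -/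
open Finset

namespace TiltedAux

/-- Sperner's theorem for families of subsets of a fixed finset of naturals. -/
lemma sperner_subset (S : Finset ℕ) (𝒜 : Finset (Finset ℕ))
    (hS : ∀ A ∈ 𝒜, A ⊆ S)
    (hac : IsAntichain (· ⊆ ·) (𝒜 : Set (Finset ℕ))) :
    𝒜.card ≤ S.card.choose (S.card / 2) := by
  classical
  set φ : Finset ℕ → Finset {x // x ∈ S} := fun A => A.subtype (· ∈ S) with hφ
  have hrec : ∀ A ∈ 𝒜, (φ A).map (Function.Embedding.subtype _) = A := by
    intro A hA
    rw [hφ]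
    simp only [Finset.subtype_map]
    exact Finset.filter_eq_self.mpr (fun x hx => hS A hA hx)
  have hinj : Set.InjOn φ 𝒜 := by
    intro A1 h1 A2 h2 he
    have := congrArg (Finset.map (Function.Embedding.subtype (· ∈ S))) he
    rwa [hrec A1 h1, hrec A2 h2] at this
  have hcard : (𝒜.image φ).card = 𝒜.card := Finset.card_image_of_injOn hinj
  have hac' : IsAntichain (· ⊆ ·) (((𝒜.image φ : Finset (Finset {x // x ∈ S})) : Finset (Finset {x // x ∈ S})) : Set (Finset {x // x ∈ S})) := by
    intro x hx y hy hne hsub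
    simp only [coe_image, Set.mem_image, mem_coe] at hx hy
    obtain ⟨A1, h1, rfl⟩ := hx
    obtain ⟨A2, h2, rfl⟩ := hy
    have hA : A1 ≠ A2 := fun h => hne (by rw [h])
    have hsub' : A1 ⊆ A2 := by
      have := (Finset.map_subset_map (f := Function.Embedding.subtype (· ∈ S))).mpr hsub
      rwa [hrec A1 h1, hrec A2 h2] at this
    exact hac (mem_coe.mpr h1) (mem_coe.mpr h2) hA hsub'
  calc 𝒜.card = (𝒜.image φ).card := hcard.symm
    _ ≤ (Fintype.card {x // x ∈ S}).choose (Fintype.card {x // x ∈ S} / 2) := IsAntichain.sperner hac'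
    _ = S.card.choose (S.card / 2) := by rw [Fintype.card_coe]

/-- Mirsky-type height function for a weight `w` on finsets. -/
def hfun (w : Finset ℕ → ℕ) (A : Finset ℕ) : ℕ :=
  A.ssubsets.attach.sup (fun X => hfun w X.1 + w X.1)
termination_by A.card
decreasing_by
  exact Finset.card_lt_card (Finset.mem_ssubsets.mp X.2)

lemma hfun_le (w : Finset ℕ → ℕ) {X A : Finset ℕ} (h : X ⊂ A) :
    hfun w X + w X ≤ hfun w A := by
  conv_rhs => rw [hfun]
  exact Finset.le_sup (f := fun Y : {Y // Y ∈ A.ssubsets} => hfun w Y.1 + w Y.1)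
    (Finset.mem_attach _ ⟨X, Finset.mem_ssubsets.mpr h⟩)

lemma chain_insert {A : Finset ℕ} {c : Finset (Finset ℕ)}
    (hc1 : ∀ X ∈ c, X ⊂ A) (hc2 : ∀ X ∈ c, ∀ Y ∈ c, X ⊆ Y ∨ Y ⊆ X) :
    ∀ X ∈ insert A c, ∀ Y ∈ insert A c, X ⊆ Y ∨ Y ⊆ X := by
  intro X hX Y hY
  rcases Finset.mem_insert.mp hX with hX' | hX'
  · rcases Finset.mem_insert.mp hY with hY' | hY'
    · rw [hX', hY']
      exact Or.inl subset_rfl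
    · rw [hX']
      exact Or.inr (hc1 Y hY').subset
  · rcases Finset.mem_insert.mp hY with hY' | hY'
    · rw [hY']
      exact Or.inl (hc1 X hX').subset
    · exact hc2 X hX' Y hY'

lemma hfun_spec (w : Finset ℕ → ℕ) (A : Finset ℕ) :
    ∃ c : Finset (Finset ℕ), (∀ X ∈ c, X ⊂ A) ∧
      (∀ X ∈ c, ∀ Y ∈ c, X ⊆ Y ∨ Y ⊆ X) ∧ ∑ X ∈ c, w X = hfun w A := by
  induction A using Finset.strongInductionOn with
  | _ A ih =>
    rcases A.eq_empty_or_nonempty with rfl | hA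
    · refine ⟨∅, by simp, by simp, ?_⟩
      rw [hfun]
      have he : (∅ : Finset ℕ).ssubsets = ∅ := by
        ext X
        simp only [Finset.mem_ssubsets, Finset.notMem_empty, iff_false]
        exact Finset.not_ssubset_empty X
      rw [he]
      simp
    · have hne : (A.ssubsets.attach).Nonempty := by
        rw [Finset.attach_nonempty_iff]
        exact ⟨∅, Finset.empty_mem_ssubsets hA⟩
      obtain ⟨X₀, -, hX₀⟩ :=
        Finset.exists_mem_eq_sup A.ssubsets.attach hne (fun X => hfun w X.1 + w X.1)
      have hX₀A : X₀.1 ⊂ A := Finset.mem_ssubsets.mp X₀.2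
      obtain ⟨c₀, hc1, hc2, hc3⟩ := ih X₀.1 hX₀A
      have hnotin : X₀.1 ∉ c₀ := fun h => (hc1 _ h).ne rfl
      refine ⟨insert X₀.1 c₀, ?_, chain_insert hc1 hc2, ?_⟩
      · intro X hX
        rcases Finset.mem_insert.mp hX with hX' | hX'
        · rw [hX']
          exact hX₀A
        · exact (hc1 X hX').trans hX₀A
      · rw [Finset.sum_insert hnotin, hc3]
        conv_rhs => rw [hfun, hX₀]
        omega

/-- Key combinatorial bound: a family such that no two members are comparable
"downward on `B`, upward on `T`" (in either mixed or plain sense) has size at most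
the product of the middle binomial coefficients. -/
lemma cross_bound (B T : Finset ℕ) (𝓕 : Finset (Finset ℕ))
    (hsub : ∀ F ∈ 𝓕, F ⊆ B ∪ T)
    (h1 : ∀ F ∈ 𝓕, ∀ G ∈ 𝓕, F ≠ G → F ∩ B ⊆ G ∩ B → G ∩ T ⊆ F ∩ T → False)
    (h2 : ∀ F ∈ 𝓕, ∀ G ∈ 𝓕, F ≠ G → F ∩ B ⊆ G ∩ B → F ∩ T ⊆ G ∩ T → False) :
    𝓕.card ≤ (B.card.choose (B.card / 2)) * (T.card.choose (T.card / 2)) := by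
  classical
  set K := T.card.choose (T.card / 2) with hK
  set w : Finset ℕ → ℕ := fun A => (𝓕.filter fun F => F ∩ B = A).card with hw
  have hrecon : ∀ F ∈ 𝓕, (F ∩ B) ∪ (F ∩ T) = F := by
    intro F hF
    rw [← Finset.inter_union_distrib_left]
    exact Finset.inter_eq_left.mpr (hsub F hF)
  -- sum of fibers along any chain of bottom-parts is at most K
  have chainsum : ∀ c : Finset (Finset ℕ),
      (∀ A ∈ c, ∀ A' ∈ c, A ⊆ A' ∨ A' ⊆ A) → ∑ A ∈ c, w A ≤ K := by
    intro c hchain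
    set 𝒯 : Finset ℕ → Finset (Finset ℕ) :=
      fun A => (𝓕.filter fun F => F ∩ B = A).image (fun F => F ∩ T) with h𝒯
    have hwT : ∀ A, w A = (𝒯 A).card := by
      intro A
      rw [h𝒯, hw]
      rw [Finset.card_image_of_injOn]
      intro F hF F' hF' hFT
      simp only [Finset.mem_coe, Finset.mem_filter] at hF hF'
      have hFT' : F ∩ T = F' ∩ T := hFT
      rw [← hrecon F hF.1, ← hrecon F' hF'.1, hF.2, hF'.2, hFT']
    have hdisj : ∀ A ∈ c, ∀ A' ∈ c, A ≠ A' → Disjoint (𝒯 A) (𝒯 A') := by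
      intro A hA A' hA' hne
      rw [Finset.disjoint_left]
      intro S hS hS'
      simp only [h𝒯, Finset.mem_image, Finset.mem_filter] at hS hS'
      obtain ⟨F, ⟨hF, hFB⟩, hFT⟩ := hS
      obtain ⟨G, ⟨hG, hGB⟩, hGT⟩ := hS'
      have hFG : F ≠ G := by
        intro h
        exact hne (by rw [← hFB, ← hGB, h])
      rcases hchain A hA A' hA' with hAA | hAA
      · exact h2 F hF G hG hFG (by rw [hFB, hGB]; exact hAA)
          (by rw [hFT, hGT])
      · exact h2 G hG F hF hFG.symm (by rw [hFB, hGB]; exact hAA)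
          (by rw [hFT, hGT])
    have hcard : ∑ A ∈ c, (𝒯 A).card = (c.biUnion 𝒯).card :=
      (Finset.card_biUnion hdisj).symm
    have hanti : IsAntichain (· ⊆ ·) ((↑(c.biUnion 𝒯) : Set (Finset ℕ))) := by
      intro S hS S' hS' hne hsubS
      simp only [Finset.mem_coe, Finset.mem_biUnion] at hS hS'
      obtain ⟨A, hA, hSA⟩ := hS
      obtain ⟨A', hA', hSA'⟩ := hS'
      simp only [h𝒯, Finset.mem_image, Finset.mem_filter] at hSA hSA'
      obtain ⟨F, ⟨hF, hFB⟩, hFT⟩ := hSA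
      obtain ⟨G, ⟨hG, hGB⟩, hGT⟩ := hSA'
      have hFG : F ≠ G := by
        intro h
        exact hne (by rw [← hFT, ← hGT, h])
      rcases hchain A hA A' hA' with hAA | hAA
      · exact h2 F hF G hG hFG (by rw [hFB, hGB]; exact hAA)
          (by rw [hFT, hGT]; exact hsubS)
      · exact h1 G hG F hF hFG.symm (by rw [hFB, hGB]; exact hAA)
          (by rw [hFT, hGT]; exact hsubS)
    have hsubT : ∀ S ∈ c.biUnion 𝒯, S ⊆ T := by
      intro S hS
      simp only [Finset.mem_biUnion, h𝒯, Finset.mem_image, Finset.mem_filter] at hS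
      obtain ⟨A, -, F, -, hFT⟩ := hS
      rw [← hFT]
      exact Finset.inter_subset_right
    calc ∑ A ∈ c, w A = ∑ A ∈ c, (𝒯 A).card := by
          exact Finset.sum_congr rfl (fun A _ => hwT A)
      _ = (c.biUnion 𝒯).card := hcard
      _ ≤ K := sperner_subset T _ hsubT hanti
  -- every chain realizes the height function; hence a uniform bound
  have hKbound : ∀ A, hfun w A + w A ≤ K := by
    intro A
    obtain ⟨c, hc1, hc2, hc3⟩ := hfun_spec w A
    have hnotin : A ∉ c := fun h => (hc1 _ h).ne rfl
    have := chainsum (insert A c) (chain_insert hc1 hc2)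
    rw [Finset.sum_insert hnotin, hc3] at this
    omega
  -- the Mirsky decomposition into K antichains
  have hfib : 𝓕.card = ∑ A ∈ B.powerset, w A := by
    refine Finset.card_eq_sum_card_fiberwise ?_
    intro F hF
    exact Finset.mem_powerset.mpr Finset.inter_subset_right
  have hstep : ∀ A, w A =
      ((Finset.range K).filter (fun j => hfun w A ≤ j ∧ j < hfun w A + w A)).card := by
    intro A
    have he : (Finset.range K).filter (fun j => hfun w A ≤ j ∧ j < hfun w A + w A)
        = Finset.Ico (hfun w A) (hfun w A + w A) := by
      ext j
      simp only [Finset.mem_filter, Finset.mem_range, Finset.mem_Ico]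
      have := hKbound A
      omega
    rw [he, Nat.card_Ico]
    omega
  have hswap : ∑ A ∈ B.powerset, w A =
      ∑ j ∈ Finset.range K,
        ((B.powerset).filter (fun A => hfun w A ≤ j ∧ j < hfun w A + w A)).card := by
    calc ∑ A ∈ B.powerset, w A
        = ∑ A ∈ B.powerset, ∑ j ∈ Finset.range K,
            (if hfun w A ≤ j ∧ j < hfun w A + w A then 1 else 0) := by
          refine Finset.sum_congr rfl (fun A _ => ?_)
          exact (hstep A).trans (Finset.card_filter _ _)
      _ = ∑ j ∈ Finset.range K, ∑ A ∈ B.powerset,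
            (if hfun w A ≤ j ∧ j < hfun w A + w A then 1 else 0) := Finset.sum_comm
      _ = ∑ j ∈ Finset.range K,
            ((B.powerset).filter (fun A => hfun w A ≤ j ∧ j < hfun w A + w A)).card := by
          refine Finset.sum_congr rfl (fun j _ => ?_)
          exact (Finset.card_filter _ _).symm
  have hanti_j : ∀ j,
      ((B.powerset).filter (fun A => hfun w A ≤ j ∧ j < hfun w A + w A)).card
        ≤ B.card.choose (B.card / 2) := by
    intro j
    refine sperner_subset B _ ?_ ?_
    · intro A hA
      exact Finset.mem_powerset.mp (Finset.mem_filter.mp hA).1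
    · intro A hA A' hA' hne hsubA
      simp only [Finset.mem_coe, Finset.mem_filter] at hA hA'
      have hss : A ⊂ A' := lt_of_le_of_ne hsubA hne
      have := hfun_le w hss
      omega
  calc 𝓕.card = ∑ A ∈ B.powerset, w A := hfib
    _ = ∑ j ∈ Finset.range K,
        ((B.powerset).filter (fun A => hfun w A ≤ j ∧ j < hfun w A + w A)).card := hswap
    _ ≤ ∑ _j ∈ Finset.range K, B.card.choose (B.card / 2) :=
        Finset.sum_le_sum (fun j _ => hanti_j j)
    _ = K * (B.card.choose (B.card / 2)) := by rw [Finset.sum_const, Finset.card_range]; ring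
    _ = (B.card.choose (B.card / 2)) * K := mul_comm _ _

/-- `centralBinom k ^ 2 * (2k+1) ≤ 16^k`, i.e. `centralBinom k ≤ 4^k / √(2k+1)`. -/
lemma cb_sq (k : ℕ) : (Nat.centralBinom k) ^ 2 * (2 * k + 1) ≤ 16 ^ k := by
  induction k with
  | zero => simp [Nat.centralBinom]
  | succ k ih =>
    have key := Nat.succ_mul_centralBinom_succ k
    have hpos : 0 < (k + 1) ^ 2 := by positivity
    refine Nat.le_of_mul_le_mul_left ?_ hpos
    calc (k + 1) ^ 2 * ((Nat.centralBinom (k + 1)) ^ 2 * (2 * (k + 1) + 1))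
        = ((k + 1) * Nat.centralBinom (k + 1)) ^ 2 * (2 * k + 3) := by ring
      _ = (2 * (2 * k + 1) * Nat.centralBinom k) ^ 2 * (2 * k + 3) := by rw [key]
      _ = (4 * (2 * k + 1) * (2 * k + 3)) * ((Nat.centralBinom k) ^ 2 * (2 * k + 1)) := by
          ring
      _ ≤ (4 * (2 * k + 1) * (2 * k + 3)) * 16 ^ k := Nat.mul_le_mul_left _ ih
      _ ≤ (16 * (k + 1) ^ 2) * 16 ^ k := Nat.mul_le_mul_right _ (by nlinarith)
      _ = (k + 1) ^ 2 * 16 ^ (k + 1) := by ring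


lemma choose_half_le (m : ℕ) : m.choose (m / 2) ≤ 2 * Nat.centralBinom (m / 2) := by
  rcases Nat.even_or_odd' m with ⟨a, rfl | rfl⟩
  · have h : 2 * a / 2 = a := by omega
    rw [h, Nat.centralBinom_eq_two_mul_choose]
    omega
  · have h : (2 * a + 1) / 2 = a := by omega
    rw [h]
    rcases a with _ | b
    · simp [Nat.centralBinom]
    · have e : 2 * (b + 1) + 1 = (2 * (b + 1)) + 1 := rfl
      rw [e, Nat.choose_succ_succ (2 * (b + 1)) b]
      simp only [Nat.succ_eq_add_one]
      have h2 : 2 * (b + 1) / 2 = b + 1 := by omega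
      have u1 : Nat.choose (2 * (b + 1)) b ≤ Nat.centralBinom (b + 1) := by
        have := Nat.choose_le_middle b (2 * (b + 1))
        rwa [h2, ← Nat.centralBinom_eq_two_mul_choose] at this
      have u2 : Nat.choose (2 * (b + 1)) (b + 1) ≤ Nat.centralBinom (b + 1) := by
        have := Nat.choose_le_middle (b + 1) (2 * (b + 1))
        rwa [h2, ← Nat.centralBinom_eq_two_mul_choose] at this
      omega

lemma numeric_main (n : ℕ) (hn : 1 ≤ n) :
    (n / 2).choose ((n / 2) / 2) * ((n - n / 2).choose ((n - n / 2) / 2)) * n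
      ≤ 12 * 2 ^ n := by
  set m := n / 2 with hm
  set t := n - n / 2 with ht
  set k1 := m / 2 with hk1
  set k2 := t / 2 with hk2
  set u := 2 * k1 + 1 with hu
  set v := 2 * k2 + 1 with hv
  have hu1 : 1 ≤ u := by omega
  have hv1 : 1 ≤ v := by omega
  have hun : n ≤ 2 * u + 1 := by omega
  have hvn : n ≤ 2 * v := by omega
  have hquad : n ^ 2 ≤ 8 * (u * v) := by
    calc n ^ 2 = n * n := sq n
      _ ≤ (2 * u + 1) * (2 * v) := Nat.mul_le_mul hun hvn
      _ ≤ 8 * (u * v) := by nlinarith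
  have hexp : 2 * (k1 + k2) ≤ n := by omega
  have h16 : (16 : ℕ) ^ (k1 + k2) ≤ 4 ^ n := by
    calc (16 : ℕ) ^ (k1 + k2) = (4 ^ 2) ^ (k1 + k2) := by norm_num
      _ = 4 ^ (2 * (k1 + k2)) := by rw [← pow_mul]
      _ ≤ 4 ^ n := Nat.pow_le_pow_right (by norm_num) hexp
  have hA := choose_half_le m
  have hB := choose_half_le t
  have h1 := cb_sq k1
  have h2 := cb_sq k2
  set c1 := Nat.centralBinom k1 with hc1
  set c2 := Nat.centralBinom k2 with hc2
  have hsq : (m.choose k1 * t.choose k2 * n) ^ 2 ≤ (12 * 2 ^ n) ^ 2 := by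
    calc (m.choose k1 * t.choose k2 * n) ^ 2
        ≤ (2 * c1 * (2 * c2) * n) ^ 2 := by
          refine Nat.pow_le_pow_left ?_ 2
          exact Nat.mul_le_mul (Nat.mul_le_mul hA hB) le_rfl
      _ = 16 * (c1 ^ 2 * c2 ^ 2) * n ^ 2 := by ring
      _ ≤ 16 * (c1 ^ 2 * c2 ^ 2) * (8 * (u * v)) := Nat.mul_le_mul_left _ hquad
      _ = 128 * ((c1 ^ 2 * u) * (c2 ^ 2 * v)) := by ring
      _ ≤ 128 * (16 ^ k1 * 16 ^ k2) := by
          refine Nat.mul_le_mul_left _ ?_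
          exact Nat.mul_le_mul h1 h2
      _ = 128 * 16 ^ (k1 + k2) := by rw [pow_add]
      _ ≤ 128 * 4 ^ n := Nat.mul_le_mul_left _ h16
      _ ≤ 144 * 4 ^ n := Nat.mul_le_mul_right _ (by norm_num)
      _ = (12 * 2 ^ n) ^ 2 := by
          have h4 : (4 : ℕ) ^ n = 2 ^ n * 2 ^ n := by
            rw [← mul_pow]
            norm_num
          rw [h4]
          ring
  have := (Nat.pow_le_pow_iff_left (n := 2) (by norm_num)).mp hsq
  exact this

end TiltedAux

open TiltedAux in
/-- A `(0,0)`-tilted Sperner family with patterns (defined by condition (ii)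
alone) has size `O(2^n / n)`. -/
theorem pattern_only_family_bound :
    ∃ C : ℝ, ∀ n : ℕ, 1 ≤ n → ∀ 𝓕 : Finset (Finset ℕ),
      (∀ F ∈ 𝓕, F ⊆ Finset.Icc 1 n) →
      (∀ F ∈ 𝓕, ∀ G ∈ 𝓕, F ≠ G → ¬(∀ f ∈ F \ G, ∀ g ∈ G \ F, g < f)) →
      (𝓕.card : ℝ) ≤ C * 2 ^ n / (n : ℝ) := by
  refine ⟨12, ?_⟩
  intro n hn 𝓕 hsub hforbid
  classical
  set m := n / 2 with hm
  set B := Finset.Icc 1 m with hB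
  set T := Finset.Icc (m + 1) n with hT
  have hBT : B ∪ T = Finset.Icc 1 n := by
    ext x
    simp only [hB, hT, Finset.mem_union, Finset.mem_Icc]
    omega
  have hsub' : ∀ F ∈ 𝓕, F ⊆ B ∪ T := by
    intro F hF
    rw [hBT]
    exact hsub F hF
  have h1 : ∀ F ∈ 𝓕, ∀ G ∈ 𝓕, F ≠ G → F ∩ B ⊆ G ∩ B → G ∩ T ⊆ F ∩ T → False := by
    intro F hF G hG hne hb ht
    refine hforbid F hF G hG hne ?_
    intro f hf g hg
    rw [Finset.mem_sdiff] at hf hg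
    have hfT : f ∈ T := by
      rcases Finset.mem_union.mp (hsub' F hF hf.1) with hBmem | hTmem
      · exact absurd ((Finset.mem_inter.mp (hb (Finset.mem_inter.mpr ⟨hf.1, hBmem⟩))).1) hf.2
      · exact hTmem
    have hgB : g ∈ B := by
      rcases Finset.mem_union.mp (hsub' G hG hg.1) with hBmem | hTmem
      · exact hBmem
      · exact absurd ((Finset.mem_inter.mp (ht (Finset.mem_inter.mpr ⟨hg.1, hTmem⟩))).1) hg.2
    have h1' : m + 1 ≤ f := (Finset.mem_Icc.mp hfT).1
    have h2' : g ≤ m := (Finset.mem_Icc.mp hgB).2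
    omega
  have h2 : ∀ F ∈ 𝓕, ∀ G ∈ 𝓕, F ≠ G → F ∩ B ⊆ G ∩ B → F ∩ T ⊆ G ∩ T → False := by
    intro F hF G hG hne hb ht
    have hFG : F ⊆ G := by
      intro x hx
      rcases Finset.mem_union.mp (hsub' F hF hx) with hBmem | hTmem
      · exact (Finset.mem_inter.mp (hb (Finset.mem_inter.mpr ⟨hx, hBmem⟩))).1
      · exact (Finset.mem_inter.mp (ht (Finset.mem_inter.mpr ⟨hx, hTmem⟩))).1
    refine hforbid F hF G hG hne ?_
    intro f hf g hg
    rw [Finset.mem_sdiff] at hf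
    exact absurd (hFG hf.1) hf.2
  have hmain := cross_bound B T 𝓕 hsub' h1 h2
  have hBcard : B.card = m := by
    rw [hB, Nat.card_Icc]
    omega
  have hTcard : T.card = n - m := by
    rw [hT, Nat.card_Icc]
    omega
  rw [hBcard, hTcard] at hmain
  have hnum := numeric_main n hn
  rw [← hm] at hnum
  have hnat : 𝓕.card * n ≤ 12 * 2 ^ n := by
    calc 𝓕.card * n ≤ (m.choose (m / 2) * ((n - m).choose ((n - m) / 2))) * n :=
          Nat.mul_le_mul_right _ hmain
      _ ≤ 12 * 2 ^ n := hnum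
  have hnpos : (0 : ℝ) < (n : ℝ) := by
    exact_mod_cast Nat.pos_of_ne_zero (by omega)
  rw [le_div_iff₀ hnpos]
  exact_mod_cast hnat
end
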